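/- For the Cheng-Kac Jordan superalgebra J = JCK(Z,δ): (i) every odd derivation of J is inner, i.e., Der(J)₁ = Inder(J)₁; (ii) the restriction map Der(J)^{[0,0]} → Der(K), d ↦ d|_K, is injective with image D̄er(K) = Der(K)₀ ⊕ {η_a : a ∈ Z}; (iii) dim_F Der(J)₁ = 4·dim_F Z = dim_F J₁. -/
import Mathlib


namespace CKJ

variable (F : Type*) [Field F] {Z : Type*} [CommRing Z] [Algebra F Z]

/-- Underlying module of the Cheng–Kac Jordan superalgebra `JCK(Z,δ)`:
the even part has `Z`-coordinates `1, w₁, w₂, w₃` (indices `0,1,2,3`) and the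
odd part has `Z`-coordinates `x, x₁, x₂, x₃` (indices `0,1,2,3`). -/
abbrev J (Z : Type*) := (Fin 4 → Z) × (Fin 4 → Z)

/-- The product of two even elements, in coordinates:
`w₁² = w₂² = 1`, `w₃² = -1`, `wᵢwⱼ = 0` for `i ≠ j`. -/
def emul (a c : Fin 4 → Z) : Fin 4 → Z :=
  ![a 0 * c 0 + a 1 * c 1 + a 2 * c 2 - a 3 * c 3,
    a 0 * c 1 + a 1 * c 0,
    a 0 * c 2 + a 2 * c 0,
    a 0 * c 3 + a 3 * c 0]

/-- The product of two odd elements: `(fx)(gx) = δ(f)g - fδ(g)`,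
`(fxᵢ)(gx) = (fg)wᵢ`, `(fx)(gxⱼ) = -(fg)wⱼ`, `(fxᵢ)(gxⱼ) = 0`. -/
def omul (δ : Z → Z) (b d : Fin 4 → Z) : Fin 4 → Z :=
  ![δ (b 0) * d 0 - b 0 * δ (d 0),
    b 1 * d 0 - b 0 * d 1,
    b 2 * d 0 - b 0 * d 2,
    b 3 * d 0 - b 0 * d 3]

/-- The product of an even element by an odd element: `f(gx) = (fg)x`,
`f(gxⱼ) = (fg)xⱼ`, `(fwᵢ)(gx) = (δ(f)g)xᵢ`, `(fwᵢ)(gxⱼ) = -(fg)x_{i×j}`. -/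
def eomul (δ : Z → Z) (a d : Fin 4 → Z) : Fin 4 → Z :=
  ![a 0 * d 0,
    a 0 * d 1 + δ (a 1) * d 0 + (a 2 * d 3 - a 3 * d 2),
    a 0 * d 2 + δ (a 2) * d 0 + (a 3 * d 1 - a 1 * d 3),
    a 0 * d 3 + δ (a 3) * d 0 + (a 2 * d 1 - a 1 * d 2)]

/-- The (supercommutative) multiplication of the Cheng–Kac Jordan
superalgebra `JCK(Z,δ)`. -/
def jmul (δ : Z → Z) (u v : J Z) : J Z :=
  (emul u.1 v.1 + omul δ u.2 v.2, eomul δ u.1 v.2 + eomul δ v.1 u.2)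

/-- `fw f k` is the even element `f·wₖ` (with the convention `w₀ = 1`). -/
def fw (f : Z) (k : Fin 4) : J Z := (fun j => if j = k then f else 0, 0)

/-- `fone f` is the even element `f·1`. -/
def fone (f : Z) : J Z := fw f 0

/-- `fxi f k` is the odd element `f·xₖ` (with the convention `x₀ = x`). -/
def fxi (f : Z) (k : Fin 4) : J Z := (0, fun j => if j = k then f else 0)

/-- `fx f` is the odd element `f·x`. -/
def fx (f : Z) : J Z := fxi f 0

/-- The grading involution of the superalgebra `J` (identity on the even part,
minus the identity on the odd part). -/
def jsig (u : J Z) : J Z := (u.1, -u.2)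

/-- `F`-linearity of a map `J → J`. -/
def IsLin (d : J Z → J Z) : Prop :=
  (∀ u v, d (u + v) = d u + d v) ∧ ∀ (c : F) (u), d (c • u) = c • d u

/-- `d` is an even derivation of the superalgebra `J = JCK(Z,δ)`. -/
def IsDer0 (δ : Z → Z) (d : J Z → J Z) : Prop :=
  IsLin F d ∧ (∀ u : J Z, u.2 = 0 → (d u).2 = 0) ∧ (∀ u : J Z, u.1 = 0 → (d u).1 = 0) ∧
    ∀ u v, d (jmul δ u v) = jmul δ (d u) v + jmul δ u (d v)

/-- `d` is an odd derivation of the superalgebra `J = JCK(Z,δ)`. -/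
def IsDer1 (δ : Z → Z) (d : J Z → J Z) : Prop :=
  IsLin F d ∧ (∀ u : J Z, u.2 = 0 → (d u).1 = 0) ∧ (∀ u : J Z, u.1 = 0 → (d u).2 = 0) ∧
    ∀ u v, d (jmul δ u v) = jmul δ (d u) v + jmul δ (jsig u) (d v)

/-- The set `Der(J) = Der(J)₀ ⊕ Der(J)₁` of all derivations of `J`. -/
def DerJSet (δ : Z → Z) : Set (J Z → J Z) :=
  {d | ∃ d0 d1, IsDer0 F δ d0 ∧ IsDer1 F δ d1 ∧ d = d0 + d1}

/-- `u` is homogeneous of parity `p` (`p = true` means odd). -/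
def IsHom (p : Bool) (u : J Z) : Prop := if p then u.1 = 0 else u.2 = 0

/-- `(-1)^{pq}` -/
def sgn (p q : Bool) : ℤ := if p && q then -1 else 1

/-- `Dgen δ ε u v` is the inner derivation `D(u,v) : c ↦ u(vc) - ε·v(uc)`;
for homogeneous `u`, `v` one takes `ε = (-1)^{|u||v|}`. -/
def Dgen (δ : Z → Z) (ε : ℤ) (u v : J Z) : J Z → J Z :=
  fun c => jmul δ u (jmul δ v c) - ε • jmul δ v (jmul δ u c)

/-- Generators `D(u,v)`, `u`, `v` homogeneous, of `Inder(J)`. -/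
def InderSet (δ : Z → Z) : Set (J Z → J Z) :=
  {d | ∃ u v p q, IsHom p u ∧ IsHom q v ∧ d = Dgen δ (sgn p q) u v}

/-- Generators of the even part `Inder(J)₀`. -/
def InderSet0 (δ : Z → Z) : Set (J Z → J Z) :=
  {d | ∃ u v p, IsHom p u ∧ IsHom p v ∧ d = Dgen δ (sgn p p) u v}

/-- Generators of the odd part `Inder(J)₁`. -/
def InderSet1 (δ : Z → Z) : Set (J Z → J Z) :=
  {d | ∃ u v p, IsHom p u ∧ IsHom (!p) v ∧ d = Dgen δ 1 u v}

/-- Coordinate index of each sector of the `ℤ₂×ℤ₂`-grading: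
`[0,0] ↦ 0`, `[1,0] ↦ 1`, `[0,1] ↦ 2`, `[1,1] ↦ 3`. -/
def idx (t : ZMod 2 × ZMod 2) : Fin 4 :=
  if t = (0, 0) then 0 else if t = (1, 0) then 1 else if t = (0, 1) then 2 else 3

/-- The sector `J^{[t]}` of the `ℤ₂×ℤ₂`-grading of `J`:
`J^{[0,0]} = Z ⊕ Zx`, `J^{[1,0]} = Zw₁ ⊕ Zx₁`, `J^{[0,1]} = Zw₂ ⊕ Zx₂`,
`J^{[1,1]} = Zw₃ ⊕ Zx₃`. -/
def gset (t : ZMod 2 × ZMod 2) : Set (J Z) :=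
  {u | ∀ k : Fin 4, k ≠ idx t → u.1 k = 0 ∧ u.2 k = 0}

/-- `d : J → J` has degree `t` with respect to the `ℤ₂×ℤ₂`-grading of `J`. -/
def DerDeg (t : ZMod 2 × ZMod 2) (d : J Z → J Z) : Prop :=
  ∀ s u, u ∈ gset s → d u ∈ gset (s + t)

/-! The Kantor double superalgebra of vector type `K = Z ⊕ Zx`, realised
as `Z × Z`: the pair `(f, g)` represents `f + gx`. -/

/-- The multiplication of `K = Z ⊕ Zx`. -/
def kmul (δ : Z → Z) (u v : Z × Z) : Z × Z :=
  (u.1 * v.1 + (δ u.2 * v.2 - u.2 * δ v.2), u.1 * v.2 + v.1 * u.2)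

/-- The grading involution of `K`. -/
def ksig (u : Z × Z) : Z × Z := (u.1, -u.2)

/-- `F`-linearity of a map `K → K`. -/
def IsKLin (d : Z × Z → Z × Z) : Prop :=
  (∀ u v, d (u + v) = d u + d v) ∧ ∀ (c : F) (u), d (c • u) = c • d u

/-- `d` is an even derivation of `K = Z ⊕ Zx`. -/
def IsKDer0 (δ : Z → Z) (d : Z × Z → Z × Z) : Prop :=
  IsKLin F d ∧ (∀ u : Z × Z, u.2 = 0 → (d u).2 = 0) ∧ (∀ u : Z × Z, u.1 = 0 → (d u).1 = 0) ∧
    ∀ u v, d (kmul δ u v) = kmul δ (d u) v + kmul δ u (d v)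

/-- `d` is an odd derivation of `K = Z ⊕ Zx`. -/
def IsKDer1 (δ : Z → Z) (d : Z × Z → Z × Z) : Prop :=
  IsKLin F d ∧ (∀ u : Z × Z, u.2 = 0 → (d u).1 = 0) ∧ (∀ u : Z × Z, u.1 = 0 → (d u).2 = 0) ∧
    ∀ u v, d (kmul δ u v) = kmul δ (d u) v + kmul δ (ksig u) (d v)

/-- `Dk δ ε u v` is the inner derivation `D(u,v) : c ↦ u(vc) - ε·v(uc)` of `K`. -/
def Dk (δ : Z → Z) (ε : ℤ) (u v : Z × Z) : Z × Z → Z × Z :=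
  fun c => kmul δ u (kmul δ v c) - ε • kmul δ v (kmul δ u c)

/-- `u ∈ K` is homogeneous of parity `p`. -/
def KHom (p : Bool) (u : Z × Z) : Prop := if p then u.1 = 0 else u.2 = 0

/-- Generators `D(u,v)`, `u`, `v` homogeneous, of `Inder(K)`. -/
def InderKSet (δ : Z → Z) : Set (Z × Z → Z × Z) :=
  {d | ∃ u v p q, KHom p u ∧ KHom q v ∧ d = Dk δ (sgn p q) u v}

/-- Generators of the even part `Inder(K)₀`. -/
def InderKSet0 (δ : Z → Z) : Set (Z × Z → Z × Z) :=
  {d | ∃ u v p, KHom p u ∧ KHom p v ∧ d = Dk δ (sgn p p) u v}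

/-- Generators of the odd part `Inder(K)₁`. -/
def InderKSet1 (δ : Z → Z) : Set (Z × Z → Z × Z) :=
  {d | ∃ u v p, KHom p u ∧ KHom (!p) v ∧ d = Dk δ 1 u v}

/-- The odd derivation `η_a` of `K`: `η_a(f) = 0`, `η_a(fx) = fa`. -/
def keta (a : Z) : Z × Z → Z × Z := fun u => (a * u.2, 0)

/-- `kcheck μ a` is the even map `μ̌` of `K` with `μ̌(f) = μ(f)` and
`μ̌(gx) = (μ(g) + ag)x`. -/
def kcheck (μ : Z → Z) (a : Z) : Z × Z → Z × Z := fun u => (μ u.1, μ u.2 + a * u.2)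

/-- The odd map `(aδ)⁻` of `K` (relevant in characteristic 3):
`(aδ)⁻(f) = (aδ(f))x`, `(aδ)⁻(fx) = δ(aδ(f))`. -/
def kminus (δ : Z → Z) (a : Z) : Z × Z → Z × Z := fun u => (δ (a * δ u.2), a * δ u.1)

/-- `D̄er(K) = Der(K)₀ ⊕ {η_a : a ∈ Z}`. -/
def DerbarK (δ : Z → Z) : Set (Z × Z → Z × Z) :=
  {e | ∃ e0 a, IsKDer0 F δ e0 ∧ e = e0 + keta a}

/-- The extension `∂̃` to `J` of the even derivation `∂ = μ̌ = kcheck μ a`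
of `K`: `∂̃|_K = ∂`, `∂̃(fwᵢ) = μ(f)wᵢ`, `∂̃(fxᵢ) = (μ(f) - af)xᵢ`. -/
def jtilde (μ : Z → Z) (a : Z) : J Z → J Z :=
  fun u => (fun k => μ (u.1 k),
    fun k => if k = 0 then μ (u.2 0) + a * u.2 0 else μ (u.2 k) - a * u.2 k)

/-- The odd derivation `η̃_a` of `J`: `η̃_a(Z) = 0`, `η̃_a(x) = a`,
`η̃_a(xⱼ) = 0` (hence `η̃_a(fwᵢ) = -(af)xᵢ`). -/
def jeta (a : Z) : J Z → J Z :=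
  fun u => (fun k => if k = 0 then a * u.2 0 else 0,
            fun k => if k = 0 then 0 else -(a * u.1 k))

/-- The even component of an endomorphism of `J`. -/
def evp (X : J Z → J Z) : J Z → J Z := fun u => (2 : F)⁻¹ • (X u + jsig (X (jsig u)))

/-- The odd component of an endomorphism of `J`. -/
def odp (X : J Z → J Z) : J Z → J Z := fun u => (2 : F)⁻¹ • (X u - jsig (X (jsig u)))

/-- The supercommutator `[X,Y]` in `End_F(J)`. -/
def sbr (X Y : J Z → J Z) : J Z → J Z :=
  X ∘ Y - Y ∘ X + (2 : F) • (odp F Y ∘ odp F X)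

/-- The odd component of an endomorphism of `K`. -/
def kodp (e : Z × Z → Z × Z) : Z × Z → Z × Z :=
  fun u => (2 : F)⁻¹ • (e u - ksig (e (ksig u)))

/-- The supercommutator `[e,e']` in `End_F(K)`. -/
def ksbr (e e' : Z × Z → Z × Z) : Z × Z → Z × Z :=
  e ∘ e' - e' ∘ e + (2 : F) • (kodp F e' ∘ kodp F e)

/-- The automorphism `τ₁ = (12)(34)`: identity on `J^{[0,0]} ⊕ J^{[1,1]}`,
`-1` on `J^{[1,0]} ⊕ J^{[0,1]}`. -/
def tau1Map : J Z → J Z :=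
  fun u => (![u.1 0, -u.1 1, -u.1 2, u.1 3], ![u.2 0, -u.2 1, -u.2 2, u.2 3])

/-- The automorphism `τ₂ = (23)(41)`: identity on `J^{[0,0]} ⊕ J^{[1,0]}`,
`-1` on `J^{[0,1]} ⊕ J^{[1,1]}`. -/
def tau2Map : J Z → J Z :=
  fun u => (![u.1 0, u.1 1, -u.1 2, -u.1 3], ![u.2 0, u.2 1, -u.2 2, -u.2 3])

/-- The automorphism `φ = (123)`: the `Z`-linear map with `φ(vⱼ) = vⱼ₊₁`,
`φ(yⱼ) = yⱼ₊₁` (indices mod 3), `φ(1) = 1`, `φ(y) = y`, where `v₁ = i·w₁`,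
`v₂ = i·w₂`, `v₃ = w₃`, `y = x`, `y₁ = i·x₁`, `y₂ = i·x₂`, `y₃ = x₃`.
In the `w`/`x` coordinates: `w₁ ↦ w₂ ↦ -i·w₃`, `w₃ ↦ i·w₁`,
`x₁ ↦ x₂ ↦ -i·x₃`, `x₃ ↦ i·x₁`. -/
def phiMap (i : F) : J Z → J Z :=
  fun u => (![u.1 0, algebraMap F Z i * u.1 3, u.1 1, -(algebraMap F Z i * u.1 2)],
            ![u.2 0, algebraMap F Z i * u.2 3, u.2 1, -(algebraMap F Z i * u.2 2)])

/-- The automorphism `τ = (12)`: `Z`-linear with `τ(1) = 1`, `τ(y) = y`,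
`τ(v₁) = -v₂`, `τ(v₂) = -v₁`, `τ(v₃) = -v₃`, `τ(y₁) = -y₂`, `τ(y₂) = -y₁`,
`τ(y₃) = -y₃`. -/
def tauMap : J Z → J Z :=
  fun u => (![u.1 0, -u.1 2, -u.1 1, -u.1 3], ![u.2 0, -u.2 2, -u.2 1, -u.2 3])

/-- `g` is an `F`-algebra automorphism of `J = JCK(Z,δ)`. -/
def IsJAut (δ : Z → Z) (g : J Z → J Z) : Prop :=
  IsLin F g ∧ Function.Bijective g ∧ ∀ u v, g (jmul δ u v) = jmul δ (g u) (g v)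

/-- The coordinatization map `Φ : K → Der(J)^{[1,1]}`,
`Φ(f + gy) = D(v₁, f·v₂) + i·D(v₃, g·y)`. -/
def Phi (δ : Z → Z) (i : F) (p : Z × Z) : J Z → J Z :=
  Dgen δ 1 (fw (algebraMap F Z i) 1) (fw (p.1 * algebraMap F Z i) 2) +
    i • Dgen δ 1 (fw (1 : Z) 3) (fx p.2)

/-- `ι₁(z) = φ ∘ Φ(z) ∘ φ⁻¹`, `ι₂(z) = φ² ∘ Φ(z) ∘ φ⁻²`, `ι₃(z) = Φ(z)`
(indexed here by `j = 0, 1, 2` respectively; note `φ⁻¹ = φ²`). -/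
def iot (δ : Z → Z) (i : F) (j : Fin 3) (z : Z × Z) : J Z → J Z :=
  if j = 0 then phiMap F i ∘ Phi F δ i z ∘ (phiMap F i ∘ phiMap F i)
  else if j = 1 then (phiMap F i ∘ phiMap F i) ∘ Phi F δ i z ∘ phiMap F i
  else Phi F δ i z

/-- The embedding `K = Z ⊕ Zx ⊆ J`. -/
def kap : Z × Z → J Z :=
  fun p => (fun j => if j = 0 then p.1 else 0, fun j => if j = 0 then p.2 else 0)

/-- The projection `J → K` onto the `Z ⊕ Zx` coordinates. -/
def pik : J Z → Z × Z := fun u => (u.1 0, u.2 0)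

end CKJ

set_option linter.unusedSectionVars false
set_option maxHeartbeats 1000000

namespace CKJAux
open CKJ

variable {F : Type*} [Field F] {Z : Type*} [CommRing Z] [Algebra F Z]

section apply_lemmas
variable (δ : Z → Z) (a b c d : Fin 4 → Z)
lemma emul_0 : emul a c 0 = a 0 * c 0 + a 1 * c 1 + a 2 * c 2 - a 3 * c 3 := rfl
lemma emul_1 : emul a c 1 = a 0 * c 1 + a 1 * c 0 := rfl
lemma emul_2 : emul a c 2 = a 0 * c 2 + a 2 * c 0 := rfl
lemma emul_3 : emul a c 3 = a 0 * c 3 + a 3 * c 0 := rfl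
lemma omul_0 : omul δ b d 0 = δ (b 0) * d 0 - b 0 * δ (d 0) := rfl
lemma omul_1 : omul δ b d 1 = b 1 * d 0 - b 0 * d 1 := rfl
lemma omul_2 : omul δ b d 2 = b 2 * d 0 - b 0 * d 2 := rfl
lemma omul_3 : omul δ b d 3 = b 3 * d 0 - b 0 * d 3 := rfl
lemma eomul_0 : eomul δ a d 0 = a 0 * d 0 := rfl
lemma eomul_1 : eomul δ a d 1 = a 0 * d 1 + δ (a 1) * d 0 + (a 2 * d 3 - a 3 * d 2) := rfl
lemma eomul_2 : eomul δ a d 2 = a 0 * d 2 + δ (a 2) * d 0 + (a 3 * d 1 - a 1 * d 3) := rfl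
lemma eomul_3 : eomul δ a d 3 = a 0 * d 3 + δ (a 3) * d 0 + (a 2 * d 1 - a 1 * d 2) := rfl
end apply_lemmas

@[simp] lemma fw_fst (f : Z) (k j : Fin 4) : (fw f k).1 j = if j = k then f else 0 := rfl
@[simp] lemma fw_snd (f : Z) (k : Fin 4) : (fw f k).2 = 0 := rfl
@[simp] lemma fxi_fst (f : Z) (k : Fin 4) : (fxi f k).1 = 0 := rfl
@[simp] lemma fxi_snd (f : Z) (k j : Fin 4) : (fxi f k).2 j = if j = k then f else 0 := rfl
@[simp] lemma jsig_fst (u : J Z) : (jsig u).1 = u.1 := rfl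
@[simp] lemma jsig_snd (u : J Z) : (jsig u).2 = -u.2 := rfl

lemma ext4 {f g : Fin 4 → Z} (h0 : f 0 = g 0) (h1 : f 1 = g 1) (h2 : f 2 = g 2)
    (h3 : f 3 = g 3) : f = g := by
  funext k; fin_cases k <;> assumption

lemma jext {u v : J Z} (h0 : u.1 0 = v.1 0) (h1 : u.1 1 = v.1 1) (h2 : u.1 2 = v.1 2)
    (h3 : u.1 3 = v.1 3) (g0 : u.2 0 = v.2 0) (g1 : u.2 1 = v.2 1) (g2 : u.2 2 = v.2 2)
    (g3 : u.2 3 = v.2 3) : u = v :=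
  Prod.ext (ext4 h0 h1 h2 h3) (ext4 g0 g1 g2 g3)

@[simp] lemma fw_zero (k : Fin 4) : fw (0 : Z) k = (0 : J Z) := by
  refine jext ?_ ?_ ?_ ?_ ?_ ?_ ?_ ?_ <;> simp
@[simp] lemma fxi_zero (k : Fin 4) : fxi (0 : Z) k = (0 : J Z) := by
  refine jext ?_ ?_ ?_ ?_ ?_ ?_ ?_ ?_ <;> simp
lemma fw_neg (f : Z) (k : Fin 4) : fw (-f) k = -(fw f k) := by
  refine Prod.ext (funext fun j => ?_) (by simp [fw])
  simp only [fw, Prod.fst_neg, Pi.neg_apply]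
  split <;> simp

lemma fw_add (f g : Z) (k : Fin 4) : fw (f + g) k = fw f k + fw g k := by
  refine Prod.ext (funext fun j => ?_) (by simp [fw])
  simp only [fw, Prod.fst_add, Pi.add_apply]
  split <;> simp

lemma fw_smul (c : F) (f : Z) (k : Fin 4) : fw (c • f) k = c • fw f k := by
  refine Prod.ext (funext fun j => ?_) (by simp [fw])
  simp only [fw, Prod.smul_fst, Pi.smul_apply]
  split <;> simp

lemma fxi_neg (f : Z) (k : Fin 4) : fxi (-f) k = -(fxi f k) := by
  refine Prod.ext (by simp [fxi]) (funext fun j => ?_)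
  simp only [fxi, Prod.snd_neg, Pi.neg_apply]
  split <;> simp

lemma fxi_add (f g : Z) (k : Fin 4) : fxi (f + g) k = fxi f k + fxi g k := by
  refine Prod.ext (by simp [fxi]) (funext fun j => ?_)
  simp only [fxi, Prod.snd_add, Pi.add_apply]
  split <;> simp

lemma fxi_smul (c : F) (f : Z) (k : Fin 4) : fxi (c • f) k = c • fxi f k := by
  refine Prod.ext (by simp [fxi]) (funext fun j => ?_)
  simp only [fxi, Prod.smul_snd, Pi.smul_apply]
  split <;> simp

lemma decomp (u : J Z) : u = fw (u.1 0) 0 + fw (u.1 1) 1 + fw (u.1 2) 2 + fw (u.1 3) 3 +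
    fxi (u.2 0) 0 + fxi (u.2 1) 1 + fxi (u.2 2) 2 + fxi (u.2 3) 3 := by
  refine jext ?_ ?_ ?_ ?_ ?_ ?_ ?_ ?_ <;> simp

/-- explicit form of a general odd derivation -/
def OddD (δ : Z → Z) (b a1 a2 a3 : Z) : J Z → J Z := fun u =>
  (![b*u.2 0 - a1*u.2 1 - a2*u.2 2 + a3*u.2 3,
     δ a1*u.2 0 - a1*δ (u.2 0) - a3*u.2 2 + a2*u.2 3,
     δ a2*u.2 0 - a2*δ (u.2 0) + a3*u.2 1 - a1*u.2 3,
     δ a3*u.2 0 - a3*δ (u.2 0) + a2*u.2 1 - a1*u.2 2],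
   ![-(a1*u.1 1) - a2*u.1 2 + a3*u.1 3,
     -(a1*δ (u.1 0)) - b*u.1 1 - a3*δ (u.1 2) + a2*δ (u.1 3),
     -(a2*δ (u.1 0)) + a3*δ (u.1 1) - b*u.1 2 - a1*δ (u.1 3),
     -(a3*δ (u.1 0)) + a2*δ (u.1 1) - a1*δ (u.1 2) - b*u.1 3])

section odd_apply
variable (δ : Z → Z) (b a1 a2 a3 : Z) (u : J Z)
lemma OddD_1_0 : (OddD δ b a1 a2 a3 u).1 0 = b*u.2 0 - a1*u.2 1 - a2*u.2 2 + a3*u.2 3 := rfl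
lemma OddD_1_1 : (OddD δ b a1 a2 a3 u).1 1 = δ a1*u.2 0 - a1*δ (u.2 0) - a3*u.2 2 + a2*u.2 3 := rfl
lemma OddD_1_2 : (OddD δ b a1 a2 a3 u).1 2 = δ a2*u.2 0 - a2*δ (u.2 0) + a3*u.2 1 - a1*u.2 3 := rfl
lemma OddD_1_3 : (OddD δ b a1 a2 a3 u).1 3 = δ a3*u.2 0 - a3*δ (u.2 0) + a2*u.2 1 - a1*u.2 2 := rfl
lemma OddD_2_0 : (OddD δ b a1 a2 a3 u).2 0 = -(a1*u.1 1) - a2*u.1 2 + a3*u.1 3 := rfl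
lemma OddD_2_1 : (OddD δ b a1 a2 a3 u).2 1 = -(a1*δ (u.1 0)) - b*u.1 1 - a3*δ (u.1 2) + a2*δ (u.1 3) := rfl
lemma OddD_2_2 : (OddD δ b a1 a2 a3 u).2 2 = -(a2*δ (u.1 0)) + a3*δ (u.1 1) - b*u.1 2 - a1*δ (u.1 3) := rfl
lemma OddD_2_3 : (OddD δ b a1 a2 a3 u).2 3 = -(a3*δ (u.1 0)) + a2*δ (u.1 1) - a1*δ (u.1 2) - b*u.1 3 := rfl
end odd_apply
lemma mww_0_0 (δ : Derivation F Z Z) (f g : Z) :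
    jmul (⇑δ) (fw f 0) ((fw g 0 : J Z)) = fw (f*g) 0 := by
  refine jext ?_ ?_ ?_ ?_ ?_ ?_ ?_ ?_ <;>
    simp [jmul, emul_0, emul_1, emul_2, emul_3, omul_0, omul_1, omul_2, omul_3,
      eomul_0, eomul_1, eomul_2, eomul_3, Pi.add_apply, Pi.zero_apply, mul_ite, ite_mul]

lemma mww_0_1 (δ : Derivation F Z Z) (f g : Z) :
    jmul (⇑δ) (fw f 0) ((fw g 1 : J Z)) = fw (f*g) 1 := by
  refine jext ?_ ?_ ?_ ?_ ?_ ?_ ?_ ?_ <;>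
    simp [jmul, emul_0, emul_1, emul_2, emul_3, omul_0, omul_1, omul_2, omul_3,
      eomul_0, eomul_1, eomul_2, eomul_3, Pi.add_apply, Pi.zero_apply, mul_ite, ite_mul]

lemma mww_0_2 (δ : Derivation F Z Z) (f g : Z) :
    jmul (⇑δ) (fw f 0) ((fw g 2 : J Z)) = fw (f*g) 2 := by
  refine jext ?_ ?_ ?_ ?_ ?_ ?_ ?_ ?_ <;>
    simp [jmul, emul_0, emul_1, emul_2, emul_3, omul_0, omul_1, omul_2, omul_3,
      eomul_0, eomul_1, eomul_2, eomul_3, Pi.add_apply, Pi.zero_apply, mul_ite, ite_mul]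

lemma mww_0_3 (δ : Derivation F Z Z) (f g : Z) :
    jmul (⇑δ) (fw f 0) ((fw g 3 : J Z)) = fw (f*g) 3 := by
  refine jext ?_ ?_ ?_ ?_ ?_ ?_ ?_ ?_ <;>
    simp [jmul, emul_0, emul_1, emul_2, emul_3, omul_0, omul_1, omul_2, omul_3,
      eomul_0, eomul_1, eomul_2, eomul_3, Pi.add_apply, Pi.zero_apply, mul_ite, ite_mul]

lemma mww_1_1 (δ : Derivation F Z Z) (f g : Z) :
    jmul (⇑δ) (fw f 1) ((fw g 1 : J Z)) = fw (f*g) 0 := by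
  refine jext ?_ ?_ ?_ ?_ ?_ ?_ ?_ ?_ <;>
    simp [jmul, emul_0, emul_1, emul_2, emul_3, omul_0, omul_1, omul_2, omul_3,
      eomul_0, eomul_1, eomul_2, eomul_3, Pi.add_apply, Pi.zero_apply, mul_ite, ite_mul]

lemma mww_2_2 (δ : Derivation F Z Z) (f g : Z) :
    jmul (⇑δ) (fw f 2) ((fw g 2 : J Z)) = fw (f*g) 0 := by
  refine jext ?_ ?_ ?_ ?_ ?_ ?_ ?_ ?_ <;>
    simp [jmul, emul_0, emul_1, emul_2, emul_3, omul_0, omul_1, omul_2, omul_3,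
      eomul_0, eomul_1, eomul_2, eomul_3, Pi.add_apply, Pi.zero_apply, mul_ite, ite_mul]

lemma mww_3_3 (δ : Derivation F Z Z) (f g : Z) :
    jmul (⇑δ) (fw f 3) ((fw g 3 : J Z)) = fw (-(f*g)) 0 := by
  refine jext ?_ ?_ ?_ ?_ ?_ ?_ ?_ ?_ <;>
    simp [jmul, emul_0, emul_1, emul_2, emul_3, omul_0, omul_1, omul_2, omul_3,
      eomul_0, eomul_1, eomul_2, eomul_3, Pi.add_apply, Pi.zero_apply, mul_ite, ite_mul]

lemma mww_1_2 (δ : Derivation F Z Z) (f g : Z) :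
    jmul (⇑δ) (fw f 1) ((fw g 2 : J Z)) = (0 : J Z) := by
  refine jext ?_ ?_ ?_ ?_ ?_ ?_ ?_ ?_ <;>
    simp [jmul, emul_0, emul_1, emul_2, emul_3, omul_0, omul_1, omul_2, omul_3,
      eomul_0, eomul_1, eomul_2, eomul_3, Pi.add_apply, Pi.zero_apply, mul_ite, ite_mul]

lemma mww_1_3 (δ : Derivation F Z Z) (f g : Z) :
    jmul (⇑δ) (fw f 1) ((fw g 3 : J Z)) = (0 : J Z) := by
  refine jext ?_ ?_ ?_ ?_ ?_ ?_ ?_ ?_ <;>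
    simp [jmul, emul_0, emul_1, emul_2, emul_3, omul_0, omul_1, omul_2, omul_3,
      eomul_0, eomul_1, eomul_2, eomul_3, Pi.add_apply, Pi.zero_apply, mul_ite, ite_mul]

lemma mww_2_1 (δ : Derivation F Z Z) (f g : Z) :
    jmul (⇑δ) (fw f 2) ((fw g 1 : J Z)) = (0 : J Z) := by
  refine jext ?_ ?_ ?_ ?_ ?_ ?_ ?_ ?_ <;>
    simp [jmul, emul_0, emul_1, emul_2, emul_3, omul_0, omul_1, omul_2, omul_3,
      eomul_0, eomul_1, eomul_2, eomul_3, Pi.add_apply, Pi.zero_apply, mul_ite, ite_mul]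

lemma mww_2_3 (δ : Derivation F Z Z) (f g : Z) :
    jmul (⇑δ) (fw f 2) ((fw g 3 : J Z)) = (0 : J Z) := by
  refine jext ?_ ?_ ?_ ?_ ?_ ?_ ?_ ?_ <;>
    simp [jmul, emul_0, emul_1, emul_2, emul_3, omul_0, omul_1, omul_2, omul_3,
      eomul_0, eomul_1, eomul_2, eomul_3, Pi.add_apply, Pi.zero_apply, mul_ite, ite_mul]

lemma mww_3_1 (δ : Derivation F Z Z) (f g : Z) :
    jmul (⇑δ) (fw f 3) ((fw g 1 : J Z)) = (0 : J Z) := by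
  refine jext ?_ ?_ ?_ ?_ ?_ ?_ ?_ ?_ <;>
    simp [jmul, emul_0, emul_1, emul_2, emul_3, omul_0, omul_1, omul_2, omul_3,
      eomul_0, eomul_1, eomul_2, eomul_3, Pi.add_apply, Pi.zero_apply, mul_ite, ite_mul]

lemma mww_3_2 (δ : Derivation F Z Z) (f g : Z) :
    jmul (⇑δ) (fw f 3) ((fw g 2 : J Z)) = (0 : J Z) := by
  refine jext ?_ ?_ ?_ ?_ ?_ ?_ ?_ ?_ <;>
    simp [jmul, emul_0, emul_1, emul_2, emul_3, omul_0, omul_1, omul_2, omul_3,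
      eomul_0, eomul_1, eomul_2, eomul_3, Pi.add_apply, Pi.zero_apply, mul_ite, ite_mul]

lemma mwx_0_0 (δ : Derivation F Z Z) (f g : Z) :
    jmul (⇑δ) (fw f 0) ((fxi g 0 : J Z)) = fxi (f*g) 0 := by
  refine jext ?_ ?_ ?_ ?_ ?_ ?_ ?_ ?_ <;>
    simp [jmul, emul_0, emul_1, emul_2, emul_3, omul_0, omul_1, omul_2, omul_3,
      eomul_0, eomul_1, eomul_2, eomul_3, Pi.add_apply, Pi.zero_apply, mul_ite, ite_mul]

lemma mwx_0_1 (δ : Derivation F Z Z) (f g : Z) :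
    jmul (⇑δ) (fw f 0) ((fxi g 1 : J Z)) = fxi (f*g) 1 := by
  refine jext ?_ ?_ ?_ ?_ ?_ ?_ ?_ ?_ <;>
    simp [jmul, emul_0, emul_1, emul_2, emul_3, omul_0, omul_1, omul_2, omul_3,
      eomul_0, eomul_1, eomul_2, eomul_3, Pi.add_apply, Pi.zero_apply, mul_ite, ite_mul]

lemma mwx_0_2 (δ : Derivation F Z Z) (f g : Z) :
    jmul (⇑δ) (fw f 0) ((fxi g 2 : J Z)) = fxi (f*g) 2 := by
  refine jext ?_ ?_ ?_ ?_ ?_ ?_ ?_ ?_ <;>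
    simp [jmul, emul_0, emul_1, emul_2, emul_3, omul_0, omul_1, omul_2, omul_3,
      eomul_0, eomul_1, eomul_2, eomul_3, Pi.add_apply, Pi.zero_apply, mul_ite, ite_mul]

lemma mwx_0_3 (δ : Derivation F Z Z) (f g : Z) :
    jmul (⇑δ) (fw f 0) ((fxi g 3 : J Z)) = fxi (f*g) 3 := by
  refine jext ?_ ?_ ?_ ?_ ?_ ?_ ?_ ?_ <;>
    simp [jmul, emul_0, emul_1, emul_2, emul_3, omul_0, omul_1, omul_2, omul_3,
      eomul_0, eomul_1, eomul_2, eomul_3, Pi.add_apply, Pi.zero_apply, mul_ite, ite_mul]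

lemma mwx_1_0 (δ : Derivation F Z Z) (f g : Z) :
    jmul (⇑δ) (fw f 1) ((fxi g 0 : J Z)) = fxi (δ f * g) 1 := by
  refine jext ?_ ?_ ?_ ?_ ?_ ?_ ?_ ?_ <;>
    simp [jmul, emul_0, emul_1, emul_2, emul_3, omul_0, omul_1, omul_2, omul_3,
      eomul_0, eomul_1, eomul_2, eomul_3, Pi.add_apply, Pi.zero_apply, mul_ite, ite_mul]

lemma mwx_1_1 (δ : Derivation F Z Z) (f g : Z) :
    jmul (⇑δ) (fw f 1) ((fxi g 1 : J Z)) = (0 : J Z) := by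
  refine jext ?_ ?_ ?_ ?_ ?_ ?_ ?_ ?_ <;>
    simp [jmul, emul_0, emul_1, emul_2, emul_3, omul_0, omul_1, omul_2, omul_3,
      eomul_0, eomul_1, eomul_2, eomul_3, Pi.add_apply, Pi.zero_apply, mul_ite, ite_mul]

lemma mwx_2_0 (δ : Derivation F Z Z) (f g : Z) :
    jmul (⇑δ) (fw f 2) ((fxi g 0 : J Z)) = fxi (δ f * g) 2 := by
  refine jext ?_ ?_ ?_ ?_ ?_ ?_ ?_ ?_ <;>
    simp [jmul, emul_0, emul_1, emul_2, emul_3, omul_0, omul_1, omul_2, omul_3,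
      eomul_0, eomul_1, eomul_2, eomul_3, Pi.add_apply, Pi.zero_apply, mul_ite, ite_mul]

lemma mwx_2_2 (δ : Derivation F Z Z) (f g : Z) :
    jmul (⇑δ) (fw f 2) ((fxi g 2 : J Z)) = (0 : J Z) := by
  refine jext ?_ ?_ ?_ ?_ ?_ ?_ ?_ ?_ <;>
    simp [jmul, emul_0, emul_1, emul_2, emul_3, omul_0, omul_1, omul_2, omul_3,
      eomul_0, eomul_1, eomul_2, eomul_3, Pi.add_apply, Pi.zero_apply, mul_ite, ite_mul]

lemma mwx_3_0 (δ : Derivation F Z Z) (f g : Z) :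
    jmul (⇑δ) (fw f 3) ((fxi g 0 : J Z)) = fxi (δ f * g) 3 := by
  refine jext ?_ ?_ ?_ ?_ ?_ ?_ ?_ ?_ <;>
    simp [jmul, emul_0, emul_1, emul_2, emul_3, omul_0, omul_1, omul_2, omul_3,
      eomul_0, eomul_1, eomul_2, eomul_3, Pi.add_apply, Pi.zero_apply, mul_ite, ite_mul]

lemma mwx_3_3 (δ : Derivation F Z Z) (f g : Z) :
    jmul (⇑δ) (fw f 3) ((fxi g 3 : J Z)) = (0 : J Z) := by
  refine jext ?_ ?_ ?_ ?_ ?_ ?_ ?_ ?_ <;>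
    simp [jmul, emul_0, emul_1, emul_2, emul_3, omul_0, omul_1, omul_2, omul_3,
      eomul_0, eomul_1, eomul_2, eomul_3, Pi.add_apply, Pi.zero_apply, mul_ite, ite_mul]

lemma mwx_1_2 (δ : Derivation F Z Z) (f g : Z) :
    jmul (⇑δ) (fw f 1) ((fxi g 2 : J Z)) = fxi (-(f*g)) 3 := by
  refine jext ?_ ?_ ?_ ?_ ?_ ?_ ?_ ?_ <;>
    simp [jmul, emul_0, emul_1, emul_2, emul_3, omul_0, omul_1, omul_2, omul_3,
      eomul_0, eomul_1, eomul_2, eomul_3, Pi.add_apply, Pi.zero_apply, mul_ite, ite_mul]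

lemma mwx_2_1 (δ : Derivation F Z Z) (f g : Z) :
    jmul (⇑δ) (fw f 2) ((fxi g 1 : J Z)) = fxi (f*g) 3 := by
  refine jext ?_ ?_ ?_ ?_ ?_ ?_ ?_ ?_ <;>
    simp [jmul, emul_0, emul_1, emul_2, emul_3, omul_0, omul_1, omul_2, omul_3,
      eomul_0, eomul_1, eomul_2, eomul_3, Pi.add_apply, Pi.zero_apply, mul_ite, ite_mul]

lemma mwx_1_3 (δ : Derivation F Z Z) (f g : Z) :
    jmul (⇑δ) (fw f 1) ((fxi g 3 : J Z)) = fxi (-(f*g)) 2 := by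
  refine jext ?_ ?_ ?_ ?_ ?_ ?_ ?_ ?_ <;>
    simp [jmul, emul_0, emul_1, emul_2, emul_3, omul_0, omul_1, omul_2, omul_3,
      eomul_0, eomul_1, eomul_2, eomul_3, Pi.add_apply, Pi.zero_apply, mul_ite, ite_mul]

lemma mwx_3_1 (δ : Derivation F Z Z) (f g : Z) :
    jmul (⇑δ) (fw f 3) ((fxi g 1 : J Z)) = fxi (f*g) 2 := by
  refine jext ?_ ?_ ?_ ?_ ?_ ?_ ?_ ?_ <;>
    simp [jmul, emul_0, emul_1, emul_2, emul_3, omul_0, omul_1, omul_2, omul_3,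
      eomul_0, eomul_1, eomul_2, eomul_3, Pi.add_apply, Pi.zero_apply, mul_ite, ite_mul]

lemma mwx_3_2 (δ : Derivation F Z Z) (f g : Z) :
    jmul (⇑δ) (fw f 3) ((fxi g 2 : J Z)) = fxi (-(f*g)) 1 := by
  refine jext ?_ ?_ ?_ ?_ ?_ ?_ ?_ ?_ <;>
    simp [jmul, emul_0, emul_1, emul_2, emul_3, omul_0, omul_1, omul_2, omul_3,
      eomul_0, eomul_1, eomul_2, eomul_3, Pi.add_apply, Pi.zero_apply, mul_ite, ite_mul]

lemma mwx_2_3 (δ : Derivation F Z Z) (f g : Z) :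
    jmul (⇑δ) (fw f 2) ((fxi g 3 : J Z)) = fxi (f*g) 1 := by
  refine jext ?_ ?_ ?_ ?_ ?_ ?_ ?_ ?_ <;>
    simp [jmul, emul_0, emul_1, emul_2, emul_3, omul_0, omul_1, omul_2, omul_3,
      eomul_0, eomul_1, eomul_2, eomul_3, Pi.add_apply, Pi.zero_apply, mul_ite, ite_mul]

lemma mxx_0_0 (δ : Derivation F Z Z) (f g : Z) :
    jmul (⇑δ) (fxi f 0) ((fxi g 0 : J Z)) = fw (δ f * g - f * δ g) 0 := by
  refine jext ?_ ?_ ?_ ?_ ?_ ?_ ?_ ?_ <;>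
    simp [jmul, emul_0, emul_1, emul_2, emul_3, omul_0, omul_1, omul_2, omul_3,
      eomul_0, eomul_1, eomul_2, eomul_3, Pi.add_apply, Pi.zero_apply, mul_ite, ite_mul]

lemma mxx_1_0 (δ : Derivation F Z Z) (f g : Z) :
    jmul (⇑δ) (fxi f 1) ((fxi g 0 : J Z)) = fw (f*g) 1 := by
  refine jext ?_ ?_ ?_ ?_ ?_ ?_ ?_ ?_ <;>
    simp [jmul, emul_0, emul_1, emul_2, emul_3, omul_0, omul_1, omul_2, omul_3,
      eomul_0, eomul_1, eomul_2, eomul_3, Pi.add_apply, Pi.zero_apply, mul_ite, ite_mul]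

lemma mxx_0_1 (δ : Derivation F Z Z) (f g : Z) :
    jmul (⇑δ) (fxi f 0) ((fxi g 1 : J Z)) = fw (-(f*g)) 1 := by
  refine jext ?_ ?_ ?_ ?_ ?_ ?_ ?_ ?_ <;>
    simp [jmul, emul_0, emul_1, emul_2, emul_3, omul_0, omul_1, omul_2, omul_3,
      eomul_0, eomul_1, eomul_2, eomul_3, Pi.add_apply, Pi.zero_apply, mul_ite, ite_mul]

lemma mxx_2_0 (δ : Derivation F Z Z) (f g : Z) :
    jmul (⇑δ) (fxi f 2) ((fxi g 0 : J Z)) = fw (f*g) 2 := by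
  refine jext ?_ ?_ ?_ ?_ ?_ ?_ ?_ ?_ <;>
    simp [jmul, emul_0, emul_1, emul_2, emul_3, omul_0, omul_1, omul_2, omul_3,
      eomul_0, eomul_1, eomul_2, eomul_3, Pi.add_apply, Pi.zero_apply, mul_ite, ite_mul]

lemma mxx_0_2 (δ : Derivation F Z Z) (f g : Z) :
    jmul (⇑δ) (fxi f 0) ((fxi g 2 : J Z)) = fw (-(f*g)) 2 := by
  refine jext ?_ ?_ ?_ ?_ ?_ ?_ ?_ ?_ <;>
    simp [jmul, emul_0, emul_1, emul_2, emul_3, omul_0, omul_1, omul_2, omul_3,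
      eomul_0, eomul_1, eomul_2, eomul_3, Pi.add_apply, Pi.zero_apply, mul_ite, ite_mul]

lemma mxx_3_0 (δ : Derivation F Z Z) (f g : Z) :
    jmul (⇑δ) (fxi f 3) ((fxi g 0 : J Z)) = fw (f*g) 3 := by
  refine jext ?_ ?_ ?_ ?_ ?_ ?_ ?_ ?_ <;>
    simp [jmul, emul_0, emul_1, emul_2, emul_3, omul_0, omul_1, omul_2, omul_3,
      eomul_0, eomul_1, eomul_2, eomul_3, Pi.add_apply, Pi.zero_apply, mul_ite, ite_mul]

lemma mxx_0_3 (δ : Derivation F Z Z) (f g : Z) :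
    jmul (⇑δ) (fxi f 0) ((fxi g 3 : J Z)) = fw (-(f*g)) 3 := by
  refine jext ?_ ?_ ?_ ?_ ?_ ?_ ?_ ?_ <;>
    simp [jmul, emul_0, emul_1, emul_2, emul_3, omul_0, omul_1, omul_2, omul_3,
      eomul_0, eomul_1, eomul_2, eomul_3, Pi.add_apply, Pi.zero_apply, mul_ite, ite_mul]

lemma mxx_1_1 (δ : Derivation F Z Z) (f g : Z) :
    jmul (⇑δ) (fxi f 1) ((fxi g 1 : J Z)) = (0 : J Z) := by
  refine jext ?_ ?_ ?_ ?_ ?_ ?_ ?_ ?_ <;>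
    simp [jmul, emul_0, emul_1, emul_2, emul_3, omul_0, omul_1, omul_2, omul_3,
      eomul_0, eomul_1, eomul_2, eomul_3, Pi.add_apply, Pi.zero_apply, mul_ite, ite_mul]

lemma mxx_1_2 (δ : Derivation F Z Z) (f g : Z) :
    jmul (⇑δ) (fxi f 1) ((fxi g 2 : J Z)) = (0 : J Z) := by
  refine jext ?_ ?_ ?_ ?_ ?_ ?_ ?_ ?_ <;>
    simp [jmul, emul_0, emul_1, emul_2, emul_3, omul_0, omul_1, omul_2, omul_3,
      eomul_0, eomul_1, eomul_2, eomul_3, Pi.add_apply, Pi.zero_apply, mul_ite, ite_mul]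

lemma mxx_1_3 (δ : Derivation F Z Z) (f g : Z) :
    jmul (⇑δ) (fxi f 1) ((fxi g 3 : J Z)) = (0 : J Z) := by
  refine jext ?_ ?_ ?_ ?_ ?_ ?_ ?_ ?_ <;>
    simp [jmul, emul_0, emul_1, emul_2, emul_3, omul_0, omul_1, omul_2, omul_3,
      eomul_0, eomul_1, eomul_2, eomul_3, Pi.add_apply, Pi.zero_apply, mul_ite, ite_mul]

lemma mxx_2_1 (δ : Derivation F Z Z) (f g : Z) :
    jmul (⇑δ) (fxi f 2) ((fxi g 1 : J Z)) = (0 : J Z) := by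
  refine jext ?_ ?_ ?_ ?_ ?_ ?_ ?_ ?_ <;>
    simp [jmul, emul_0, emul_1, emul_2, emul_3, omul_0, omul_1, omul_2, omul_3,
      eomul_0, eomul_1, eomul_2, eomul_3, Pi.add_apply, Pi.zero_apply, mul_ite, ite_mul]

lemma mxx_2_2 (δ : Derivation F Z Z) (f g : Z) :
    jmul (⇑δ) (fxi f 2) ((fxi g 2 : J Z)) = (0 : J Z) := by
  refine jext ?_ ?_ ?_ ?_ ?_ ?_ ?_ ?_ <;>
    simp [jmul, emul_0, emul_1, emul_2, emul_3, omul_0, omul_1, omul_2, omul_3,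
      eomul_0, eomul_1, eomul_2, eomul_3, Pi.add_apply, Pi.zero_apply, mul_ite, ite_mul]

lemma mxx_2_3 (δ : Derivation F Z Z) (f g : Z) :
    jmul (⇑δ) (fxi f 2) ((fxi g 3 : J Z)) = (0 : J Z) := by
  refine jext ?_ ?_ ?_ ?_ ?_ ?_ ?_ ?_ <;>
    simp [jmul, emul_0, emul_1, emul_2, emul_3, omul_0, omul_1, omul_2, omul_3,
      eomul_0, eomul_1, eomul_2, eomul_3, Pi.add_apply, Pi.zero_apply, mul_ite, ite_mul]

lemma mxx_3_1 (δ : Derivation F Z Z) (f g : Z) :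
    jmul (⇑δ) (fxi f 3) ((fxi g 1 : J Z)) = (0 : J Z) := by
  refine jext ?_ ?_ ?_ ?_ ?_ ?_ ?_ ?_ <;>
    simp [jmul, emul_0, emul_1, emul_2, emul_3, omul_0, omul_1, omul_2, omul_3,
      eomul_0, eomul_1, eomul_2, eomul_3, Pi.add_apply, Pi.zero_apply, mul_ite, ite_mul]

lemma mxx_3_2 (δ : Derivation F Z Z) (f g : Z) :
    jmul (⇑δ) (fxi f 3) ((fxi g 2 : J Z)) = (0 : J Z) := by
  refine jext ?_ ?_ ?_ ?_ ?_ ?_ ?_ ?_ <;>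
    simp [jmul, emul_0, emul_1, emul_2, emul_3, omul_0, omul_1, omul_2, omul_3,
      eomul_0, eomul_1, eomul_2, eomul_3, Pi.add_apply, Pi.zero_apply, mul_ite, ite_mul]

lemma mxx_3_3 (δ : Derivation F Z Z) (f g : Z) :
    jmul (⇑δ) (fxi f 3) ((fxi g 3 : J Z)) = (0 : J Z) := by
  refine jext ?_ ?_ ?_ ?_ ?_ ?_ ?_ ?_ <;>
    simp [jmul, emul_0, emul_1, emul_2, emul_3, omul_0, omul_1, omul_2, omul_3,
      eomul_0, eomul_1, eomul_2, eomul_3, Pi.add_apply, Pi.zero_apply, mul_ite, ite_mul]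

theorem OddD_leib (δ : Derivation F Z Z) (b a1 a2 a3 : Z) (u v : J Z) :
    OddD (⇑δ) b a1 a2 a3 (jmul (⇑δ) u v) =
      jmul (⇑δ) (OddD (⇑δ) b a1 a2 a3 u) v + jmul (⇑δ) (jsig u) (OddD (⇑δ) b a1 a2 a3 v) := by
  refine jext ?_ ?_ ?_ ?_ ?_ ?_ ?_ ?_ <;> simp only [OddD_1_0, OddD_1_1, OddD_1_2, OddD_1_3, OddD_2_0, OddD_2_1, OddD_2_2, OddD_2_3, jmul, Dgen, jsig_fst, jsig_snd, emul_0, emul_1, emul_2, emul_3, omul_0, omul_1, omul_2, omul_3, eomul_0, eomul_1, eomul_2, eomul_3, Prod.fst_add, Prod.snd_add, Prod.fst_sub, Prod.snd_sub, Pi.add_apply, Pi.sub_apply, Pi.neg_apply, Pi.zero_apply, Prod.fst_zero, Prod.snd_zero, map_add, map_sub, map_neg, map_zero, Derivation.leibniz, Derivation.map_one_eq_zero, smul_eq_mul, one_smul] <;> ring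

theorem OddD_isDer1 (δ : Derivation F Z Z) (b a1 a2 a3 : Z) :
    IsDer1 F (⇑δ) (OddD (⇑δ) b a1 a2 a3) := by
  refine ⟨⟨?_, ?_⟩, ?_, ?_, fun u v => OddD_leib δ b a1 a2 a3 u v⟩
  · intro u v
    refine jext ?_ ?_ ?_ ?_ ?_ ?_ ?_ ?_ <;>
      simp only [OddD_1_0, OddD_1_1, OddD_1_2, OddD_1_3, OddD_2_0, OddD_2_1, OddD_2_2, OddD_2_3, jmul, Dgen, jsig_fst, jsig_snd, emul_0, emul_1, emul_2, emul_3, omul_0, omul_1, omul_2, omul_3, eomul_0, eomul_1, eomul_2, eomul_3, Prod.fst_add, Prod.snd_add, Prod.fst_sub, Prod.snd_sub, Pi.add_apply, Pi.sub_apply, Pi.neg_apply, Pi.zero_apply, Prod.fst_zero, Prod.snd_zero, map_add, map_sub, map_neg, map_zero, Derivation.leibniz, Derivation.map_one_eq_zero, smul_eq_mul, one_smul, Prod.fst_add, Prod.snd_add, Pi.add_apply] <;> ring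
  · intro c u
    refine jext ?_ ?_ ?_ ?_ ?_ ?_ ?_ ?_ <;>
      simp only [OddD_1_0, OddD_1_1, OddD_1_2, OddD_1_3, OddD_2_0, OddD_2_1, OddD_2_2,
        OddD_2_3, Prod.smul_fst, Prod.smul_snd, Pi.smul_apply] <;>
      simp only [OddD_1_0, OddD_1_1, OddD_1_2, OddD_1_3, OddD_2_0, OddD_2_1, OddD_2_2, OddD_2_3, jmul, Dgen, jsig_fst, jsig_snd, emul_0, emul_1, emul_2, emul_3, omul_0, omul_1, omul_2, omul_3, eomul_0, eomul_1, eomul_2, eomul_3, Prod.fst_add, Prod.snd_add, Prod.fst_sub, Prod.snd_sub, Pi.add_apply, Pi.sub_apply, Pi.neg_apply, Pi.zero_apply, Prod.fst_zero, Prod.snd_zero, map_add, map_sub, map_neg, map_zero, Derivation.leibniz, Derivation.map_one_eq_zero, smul_eq_mul, one_smul, Algebra.smul_def,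
        Derivation.leibniz, Derivation.map_algebraMap, smul_eq_mul] <;> ring
  · intro u hu
    have h0 : ∀ j, u.2 j = 0 := fun j => by rw [hu]; rfl
    refine ext4 ?_ ?_ ?_ ?_ <;> simp [OddD_1_0, OddD_1_1, OddD_1_2, OddD_1_3, h0]
  · intro u hu
    have h0 : ∀ j, u.1 j = 0 := fun j => by rw [hu]; rfl
    refine ext4 ?_ ?_ ?_ ?_ <;> simp [OddD_2_0, OddD_2_1, OddD_2_2, OddD_2_3, h0]

theorem gen_eq (δ : Derivation F Z Z) (e o : Fin 4 → Z) :
    Dgen (⇑δ) 1 ((e, 0) : J Z) ((0, o) : J Z) =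
      OddD (⇑δ) (δ (e 0) * o 0 + e 1 * o 1 + e 2 * o 2 - e 3 * o 3)
        (e 1 * o 0) (e 2 * o 0) (e 3 * o 0) := by
  funext c
  refine jext ?_ ?_ ?_ ?_ ?_ ?_ ?_ ?_ <;> simp only [OddD_1_0, OddD_1_1, OddD_1_2, OddD_1_3, OddD_2_0, OddD_2_1, OddD_2_2, OddD_2_3, jmul, Dgen, jsig_fst, jsig_snd, emul_0, emul_1, emul_2, emul_3, omul_0, omul_1, omul_2, omul_3, eomul_0, eomul_1, eomul_2, eomul_3, Prod.fst_add, Prod.snd_add, Prod.fst_sub, Prod.snd_sub, Pi.add_apply, Pi.sub_apply, Pi.neg_apply, Pi.zero_apply, Prod.fst_zero, Prod.snd_zero, map_add, map_sub, map_neg, map_zero, Derivation.leibniz, Derivation.map_one_eq_zero, smul_eq_mul, one_smul] <;> ring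

theorem Dgen_swap (δ : Z → Z) (u v : J Z) : Dgen δ 1 u v = -Dgen δ 1 v u := by
  funext c
  simp only [Dgen, one_smul, Pi.neg_apply, neg_sub]

theorem isDer1_structure (δ : Derivation F Z Z) (d : J Z → J Z) (hd : IsDer1 F (⇑δ) d) :
    ∃ b a1 a2 a3 : Z, d = OddD (⇑δ) b a1 a2 a3 := by
  obtain ⟨⟨hadd, hsmul⟩, hp1, hp2, q⟩ := hd
  have hz : d 0 = 0 := by simpa using hsmul 0 0
  have hneg : ∀ u, d (-u) = -d u := fun u => by
    rw [← neg_one_smul F u, hsmul, neg_one_smul]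
  have hwf : ∀ (f : Z) (k : Fin 4), (d (fw f k)).1 = 0 := fun f k => hp1 _ rfl
  have hxs : ∀ (f : Z) (k : Fin 4), (d (fxi f k)).2 = 0 := fun f k => hp2 _ rfl
  obtain ⟨b, hb⟩ : ∃ z : Z, z = -(d (fw (1:Z) 1)).2 1 := ⟨_, rfl⟩
  obtain ⟨a1, ha1⟩ : ∃ z : Z, z = -(d (fw (1:Z) 1)).2 0 := ⟨_, rfl⟩
  obtain ⟨a2, ha2⟩ : ∃ z : Z, z = -(d (fw (1:Z) 2)).2 0 := ⟨_, rfl⟩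
  obtain ⟨a3, ha3⟩ : ∃ z : Z, z = (d (fw (1:Z) 3)).2 0 := ⟨_, rfl⟩
  have hB1_0 : ∀ f : Z, (d (fw f 1)).2 0 = -(a1 * f) := by
    intro f
    have h := q (fw f 0) (fw (1:Z) 1)
    rw [mww_0_1 δ] at h
    have hc := congr_fun (congrArg Prod.snd h) 0
    simp [hz, hneg, hwf, hxs, jmul, jsig_fst, jsig_snd, fw_fst, fw_snd, fxi_fst, fxi_snd, fw_neg, emul_0, emul_1, emul_2, emul_3, omul_0, omul_1, omul_2, omul_3, eomul_0, eomul_1, eomul_2, eomul_3, Prod.fst_add, Prod.snd_add, Prod.fst_neg, Prod.snd_neg, Pi.add_apply, Pi.neg_apply, Pi.zero_apply, Prod.fst_zero, Prod.snd_zero, Derivation.map_one_eq_zero, map_add, map_sub, map_neg, map_zero] at hc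
    first
      | linear_combination hc
      | linear_combination -hc
      | (rw [ha1]; first | linear_combination hc | linear_combination -hc)
  have hB2_0 : ∀ f : Z, (d (fw f 2)).2 0 = -(a2 * f) := by
    intro f
    have h := q (fw f 0) (fw (1:Z) 2)
    rw [mww_0_2 δ] at h
    have hc := congr_fun (congrArg Prod.snd h) 0
    simp [hz, hneg, hwf, hxs, jmul, jsig_fst, jsig_snd, fw_fst, fw_snd, fxi_fst, fxi_snd, fw_neg, emul_0, emul_1, emul_2, emul_3, omul_0, omul_1, omul_2, omul_3, eomul_0, eomul_1, eomul_2, eomul_3, Prod.fst_add, Prod.snd_add, Prod.fst_neg, Prod.snd_neg, Pi.add_apply, Pi.neg_apply, Pi.zero_apply, Prod.fst_zero, Prod.snd_zero, Derivation.map_one_eq_zero, map_add, map_sub, map_neg, map_zero] at hc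
    first
      | linear_combination hc
      | linear_combination -hc
      | (rw [ha2]; first | linear_combination hc | linear_combination -hc)
  have hB3_0 : ∀ f : Z, (d (fw f 3)).2 0 = a3 * f := by
    intro f
    have h := q (fw f 0) (fw (1:Z) 3)
    rw [mww_0_3 δ] at h
    have hc := congr_fun (congrArg Prod.snd h) 0
    simp [hz, hneg, hwf, hxs, jmul, jsig_fst, jsig_snd, fw_fst, fw_snd, fxi_fst, fxi_snd, fw_neg, emul_0, emul_1, emul_2, emul_3, omul_0, omul_1, omul_2, omul_3, eomul_0, eomul_1, eomul_2, eomul_3, Prod.fst_add, Prod.snd_add, Prod.fst_neg, Prod.snd_neg, Pi.add_apply, Pi.neg_apply, Pi.zero_apply, Prod.fst_zero, Prod.snd_zero, Derivation.map_one_eq_zero, map_add, map_sub, map_neg, map_zero] at hc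
    first
      | linear_combination hc
      | linear_combination -hc
      | (rw [ha3]; first | linear_combination hc | linear_combination -hc)
  have hB2_2 : ∀ f : Z, (d (fw f 2)).2 2 = -(b * f) := by
    intro f
    have h := q (fw f 2) (fw (1:Z) 1)
    rw [mww_2_1 δ] at h
    have hc := congr_fun (congrArg Prod.snd h) 3
    simp [hz, hneg, hwf, hxs, jmul, jsig_fst, jsig_snd, fw_fst, fw_snd, fxi_fst, fxi_snd, fw_neg, emul_0, emul_1, emul_2, emul_3, omul_0, omul_1, omul_2, omul_3, eomul_0, eomul_1, eomul_2, eomul_3, Prod.fst_add, Prod.snd_add, Prod.fst_neg, Prod.snd_neg, Pi.add_apply, Pi.neg_apply, Pi.zero_apply, Prod.fst_zero, Prod.snd_zero, Derivation.map_one_eq_zero, map_add, map_sub, map_neg, map_zero] at hc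
    first
      | linear_combination hc
      | linear_combination -hc
      | (rw [hb]; first | linear_combination hc | linear_combination -hc)
  have hB2_3 : ∀ f : Z, (d (fw f 2)).2 3 = -(a1 * δ f) := by
    intro f
    have h := q (fw f 2) (fw (1:Z) 1)
    rw [mww_2_1 δ] at h
    have hc := congr_fun (congrArg Prod.snd h) 2
    simp [hz, hneg, hwf, hxs, jmul, jsig_fst, jsig_snd, fw_fst, fw_snd, fxi_fst, fxi_snd, fw_neg, emul_0, emul_1, emul_2, emul_3, omul_0, omul_1, omul_2, omul_3, eomul_0, eomul_1, eomul_2, eomul_3, Prod.fst_add, Prod.snd_add, Prod.fst_neg, Prod.snd_neg, Pi.add_apply, Pi.neg_apply, Pi.zero_apply, Prod.fst_zero, Prod.snd_zero, Derivation.map_one_eq_zero, map_add, map_sub, map_neg, map_zero] at hc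
    first
      | linear_combination hc
      | linear_combination -hc
      | (rw [ha1]; first | linear_combination hc | linear_combination -hc)
  have hB1_3 : ∀ f : Z, (d (fw f 1)).2 3 = a2 * δ f := by
    intro f
    have h := q (fw f 1) (fw (1:Z) 2)
    rw [mww_1_2 δ] at h
    have hc := congr_fun (congrArg Prod.snd h) 1
    simp [hz, hneg, hwf, hxs, jmul, jsig_fst, jsig_snd, fw_fst, fw_snd, fxi_fst, fxi_snd, fw_neg, emul_0, emul_1, emul_2, emul_3, omul_0, omul_1, omul_2, omul_3, eomul_0, eomul_1, eomul_2, eomul_3, Prod.fst_add, Prod.snd_add, Prod.fst_neg, Prod.snd_neg, Pi.add_apply, Pi.neg_apply, Pi.zero_apply, Prod.fst_zero, Prod.snd_zero, Derivation.map_one_eq_zero, map_add, map_sub, map_neg, map_zero] at hc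
    first
      | linear_combination hc
      | linear_combination -hc
      | (rw [ha2]; first | linear_combination hc | linear_combination -hc)
  have hB1_1 : ∀ f : Z, (d (fw f 1)).2 1 = -(b * f) := by
    intro f
    have h := q (fw f 1) (fw (1:Z) 2)
    rw [mww_1_2 δ] at h
    have hc := congr_fun (congrArg Prod.snd h) 3
    simp [hz, hneg, hwf, hxs, jmul, jsig_fst, jsig_snd, fw_fst, fw_snd, fxi_fst, fxi_snd, fw_neg, emul_0, emul_1, emul_2, emul_3, omul_0, omul_1, omul_2, omul_3, eomul_0, eomul_1, eomul_2, eomul_3, Prod.fst_add, Prod.snd_add, Prod.fst_neg, Prod.snd_neg, Pi.add_apply, Pi.neg_apply, Pi.zero_apply, Prod.fst_zero, Prod.snd_zero, Derivation.map_one_eq_zero, map_add, map_sub, map_neg, map_zero, hB2_2] at hc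
    first | linear_combination hc | linear_combination -hc
  have hB1_2 : ∀ f : Z, (d (fw f 1)).2 2 = a3 * δ f := by
    intro f
    have h := q (fw f 1) (fw (1:Z) 3)
    rw [mww_1_3 δ] at h
    have hc := congr_fun (congrArg Prod.snd h) 1
    simp [hz, hneg, hwf, hxs, jmul, jsig_fst, jsig_snd, fw_fst, fw_snd, fxi_fst, fxi_snd, fw_neg, emul_0, emul_1, emul_2, emul_3, omul_0, omul_1, omul_2, omul_3, eomul_0, eomul_1, eomul_2, eomul_3, Prod.fst_add, Prod.snd_add, Prod.fst_neg, Prod.snd_neg, Pi.add_apply, Pi.neg_apply, Pi.zero_apply, Prod.fst_zero, Prod.snd_zero, Derivation.map_one_eq_zero, map_add, map_sub, map_neg, map_zero] at hc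
    first
      | linear_combination hc
      | linear_combination -hc
      | (rw [ha3]; first | linear_combination hc | linear_combination -hc)
  have hB2_1 : ∀ f : Z, (d (fw f 2)).2 1 = -(a3 * δ f) := by
    intro f
    have h := q (fw f 2) (fw (1:Z) 3)
    rw [mww_2_3 δ] at h
    have hc := congr_fun (congrArg Prod.snd h) 2
    simp [hz, hneg, hwf, hxs, jmul, jsig_fst, jsig_snd, fw_fst, fw_snd, fxi_fst, fxi_snd, fw_neg, emul_0, emul_1, emul_2, emul_3, omul_0, omul_1, omul_2, omul_3, eomul_0, eomul_1, eomul_2, eomul_3, Prod.fst_add, Prod.snd_add, Prod.fst_neg, Prod.snd_neg, Pi.add_apply, Pi.neg_apply, Pi.zero_apply, Prod.fst_zero, Prod.snd_zero, Derivation.map_one_eq_zero, map_add, map_sub, map_neg, map_zero] at hc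
    first
      | linear_combination hc
      | linear_combination -hc
      | (rw [ha3]; first | linear_combination hc | linear_combination -hc)
  have hB3_3 : ∀ f : Z, (d (fw f 3)).2 3 = -(b * f) := by
    intro f
    have h := q (fw f 3) (fw (1:Z) 1)
    rw [mww_3_1 δ] at h
    have hc := congr_fun (congrArg Prod.snd h) 2
    simp [hz, hneg, hwf, hxs, jmul, jsig_fst, jsig_snd, fw_fst, fw_snd, fxi_fst, fxi_snd, fw_neg, emul_0, emul_1, emul_2, emul_3, omul_0, omul_1, omul_2, omul_3, eomul_0, eomul_1, eomul_2, eomul_3, Prod.fst_add, Prod.snd_add, Prod.fst_neg, Prod.snd_neg, Pi.add_apply, Pi.neg_apply, Pi.zero_apply, Prod.fst_zero, Prod.snd_zero, Derivation.map_one_eq_zero, map_add, map_sub, map_neg, map_zero, hB1_1] at hc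
    first | linear_combination hc | linear_combination -hc
  have hB3_2 : ∀ f : Z, (d (fw f 3)).2 2 = -(a1 * δ f) := by
    intro f
    have h := q (fw f 3) (fw (1:Z) 1)
    rw [mww_3_1 δ] at h
    have hc := congr_fun (congrArg Prod.snd h) 3
    simp [hz, hneg, hwf, hxs, jmul, jsig_fst, jsig_snd, fw_fst, fw_snd, fxi_fst, fxi_snd, fw_neg, emul_0, emul_1, emul_2, emul_3, omul_0, omul_1, omul_2, omul_3, eomul_0, eomul_1, eomul_2, eomul_3, Prod.fst_add, Prod.snd_add, Prod.fst_neg, Prod.snd_neg, Pi.add_apply, Pi.neg_apply, Pi.zero_apply, Prod.fst_zero, Prod.snd_zero, Derivation.map_one_eq_zero, map_add, map_sub, map_neg, map_zero] at hc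
    first
      | linear_combination hc
      | linear_combination -hc
      | (rw [ha1]; first | linear_combination hc | linear_combination -hc)
  have hB3_1 : ∀ f : Z, (d (fw f 3)).2 1 = a2 * δ f := by
    intro f
    have h := q (fw f 3) (fw (1:Z) 2)
    rw [mww_3_2 δ] at h
    have hc := congr_fun (congrArg Prod.snd h) 3
    simp [hz, hneg, hwf, hxs, jmul, jsig_fst, jsig_snd, fw_fst, fw_snd, fxi_fst, fxi_snd, fw_neg, emul_0, emul_1, emul_2, emul_3, omul_0, omul_1, omul_2, omul_3, eomul_0, eomul_1, eomul_2, eomul_3, Prod.fst_add, Prod.snd_add, Prod.fst_neg, Prod.snd_neg, Pi.add_apply, Pi.neg_apply, Pi.zero_apply, Prod.fst_zero, Prod.snd_zero, Derivation.map_one_eq_zero, map_add, map_sub, map_neg, map_zero] at hc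
    first
      | linear_combination hc
      | linear_combination -hc
      | (rw [ha2]; first | linear_combination hc | linear_combination -hc)
  have hA_0 : ∀ f : Z, (d (fw f 0)).2 0 = 0 := by
    intro f
    have h := q (fw f 1) (fw (1:Z) 1)
    rw [mww_1_1 δ] at h
    have hc := congr_fun (congrArg Prod.snd h) 0
    simp [hz, hneg, hwf, hxs, jmul, jsig_fst, jsig_snd, fw_fst, fw_snd, fxi_fst, fxi_snd, fw_neg, emul_0, emul_1, emul_2, emul_3, omul_0, omul_1, omul_2, omul_3, eomul_0, eomul_1, eomul_2, eomul_3, Prod.fst_add, Prod.snd_add, Prod.fst_neg, Prod.snd_neg, Pi.add_apply, Pi.neg_apply, Pi.zero_apply, Prod.fst_zero, Prod.snd_zero, Derivation.map_one_eq_zero, map_add, map_sub, map_neg, map_zero, hB1_0, hB1_1, hB1_2, hB1_3] at hc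
    first | linear_combination hc | linear_combination -hc
  have hA_1 : ∀ f : Z, (d (fw f 0)).2 1 = -(a1 * δ f) := by
    intro f
    have h := q (fw f 1) (fw (1:Z) 1)
    rw [mww_1_1 δ] at h
    have hc := congr_fun (congrArg Prod.snd h) 1
    simp [hz, hneg, hwf, hxs, jmul, jsig_fst, jsig_snd, fw_fst, fw_snd, fxi_fst, fxi_snd, fw_neg, emul_0, emul_1, emul_2, emul_3, omul_0, omul_1, omul_2, omul_3, eomul_0, eomul_1, eomul_2, eomul_3, Prod.fst_add, Prod.snd_add, Prod.fst_neg, Prod.snd_neg, Pi.add_apply, Pi.neg_apply, Pi.zero_apply, Prod.fst_zero, Prod.snd_zero, Derivation.map_one_eq_zero, map_add, map_sub, map_neg, map_zero, hB1_0, hB1_1, hB1_2, hB1_3] at hc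
    first | linear_combination hc | linear_combination -hc
  have hA_2 : ∀ f : Z, (d (fw f 0)).2 2 = -(a2 * δ f) := by
    intro f
    have h := q (fw f 2) (fw (1:Z) 2)
    rw [mww_2_2 δ] at h
    have hc := congr_fun (congrArg Prod.snd h) 2
    simp [hz, hneg, hwf, hxs, jmul, jsig_fst, jsig_snd, fw_fst, fw_snd, fxi_fst, fxi_snd, fw_neg, emul_0, emul_1, emul_2, emul_3, omul_0, omul_1, omul_2, omul_3, eomul_0, eomul_1, eomul_2, eomul_3, Prod.fst_add, Prod.snd_add, Prod.fst_neg, Prod.snd_neg, Pi.add_apply, Pi.neg_apply, Pi.zero_apply, Prod.fst_zero, Prod.snd_zero, Derivation.map_one_eq_zero, map_add, map_sub, map_neg, map_zero, hB2_0, hB2_1, hB2_2, hB2_3] at hc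
    first | linear_combination hc | linear_combination -hc
  have hA_3 : ∀ f : Z, (d (fw f 0)).2 3 = -(a3 * δ f) := by
    intro f
    have h := q (fw f 3) (fw (1:Z) 3)
    rw [mww_3_3 δ] at h
    have hc := congr_fun (congrArg Prod.snd h) 3
    simp [hz, hneg, hwf, hxs, jmul, jsig_fst, jsig_snd, fw_fst, fw_snd, fxi_fst, fxi_snd, fw_neg, emul_0, emul_1, emul_2, emul_3, omul_0, omul_1, omul_2, omul_3, eomul_0, eomul_1, eomul_2, eomul_3, Prod.fst_add, Prod.snd_add, Prod.fst_neg, Prod.snd_neg, Pi.add_apply, Pi.neg_apply, Pi.zero_apply, Prod.fst_zero, Prod.snd_zero, Derivation.map_one_eq_zero, map_add, map_sub, map_neg, map_zero, hB3_0, hB3_1, hB3_2, hB3_3] at hc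
    first | linear_combination hc | linear_combination -hc
  have hC1_1 : (d (fxi (1:Z) 0)).1 1 = δ a1 := by
    have h := q (fw (1:Z) 1) (fxi (1:Z) 0)
    rw [mwx_1_0 δ] at h
    have hc := congr_fun (congrArg Prod.fst h) 0
    simp [hz, hneg, hwf, hxs, jmul, jsig_fst, jsig_snd, fw_fst, fw_snd, fxi_fst, fxi_snd, fw_neg, emul_0, emul_1, emul_2, emul_3, omul_0, omul_1, omul_2, omul_3, eomul_0, eomul_1, eomul_2, eomul_3, Prod.fst_add, Prod.snd_add, Prod.fst_neg, Prod.snd_neg, Pi.add_apply, Pi.neg_apply, Pi.zero_apply, Prod.fst_zero, Prod.snd_zero, Derivation.map_one_eq_zero, map_add, map_sub, map_neg, map_zero, hB1_0, hB1_1, hB1_2, hB1_3] at hc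
    first
      | linear_combination hc
      | linear_combination -hc
      | (rw [ha1, map_neg]; first | linear_combination hc | linear_combination -hc)
  have hC1_0 : (d (fxi (1:Z) 0)).1 0 = b := by
    have h := q (fw (1:Z) 1) (fxi (1:Z) 0)
    rw [mwx_1_0 δ] at h
    have hc := congr_fun (congrArg Prod.fst h) 1
    simp [hz, hneg, hwf, hxs, jmul, jsig_fst, jsig_snd, fw_fst, fw_snd, fxi_fst, fxi_snd, fw_neg, emul_0, emul_1, emul_2, emul_3, omul_0, omul_1, omul_2, omul_3, eomul_0, eomul_1, eomul_2, eomul_3, Prod.fst_add, Prod.snd_add, Prod.fst_neg, Prod.snd_neg, Pi.add_apply, Pi.neg_apply, Pi.zero_apply, Prod.fst_zero, Prod.snd_zero, Derivation.map_one_eq_zero, map_add, map_sub, map_neg, map_zero, hB1_0, hB1_1, hB1_2, hB1_3] at hc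
    first
      | linear_combination hc
      | linear_combination -hc
      | (rw [hb]; first | linear_combination hc | linear_combination -hc)
  have hC1_2 : (d (fxi (1:Z) 0)).1 2 = δ a2 := by
    have h := q (fw (1:Z) 2) (fxi (1:Z) 0)
    rw [mwx_2_0 δ] at h
    have hc := congr_fun (congrArg Prod.fst h) 0
    simp [hz, hneg, hwf, hxs, jmul, jsig_fst, jsig_snd, fw_fst, fw_snd, fxi_fst, fxi_snd, fw_neg, emul_0, emul_1, emul_2, emul_3, omul_0, omul_1, omul_2, omul_3, eomul_0, eomul_1, eomul_2, eomul_3, Prod.fst_add, Prod.snd_add, Prod.fst_neg, Prod.snd_neg, Pi.add_apply, Pi.neg_apply, Pi.zero_apply, Prod.fst_zero, Prod.snd_zero, Derivation.map_one_eq_zero, map_add, map_sub, map_neg, map_zero, hB2_0, hB2_1, hB2_2, hB2_3] at hc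
    first
      | linear_combination hc
      | linear_combination -hc
      | (rw [ha2, map_neg]; first | linear_combination hc | linear_combination -hc)
  have hC1_3 : (d (fxi (1:Z) 0)).1 3 = δ a3 := by
    have h := q (fw (1:Z) 3) (fxi (1:Z) 0)
    rw [mwx_3_0 δ] at h
    have hc := congr_fun (congrArg Prod.fst h) 0
    simp [hz, hneg, hwf, hxs, jmul, jsig_fst, jsig_snd, fw_fst, fw_snd, fxi_fst, fxi_snd, fw_neg, emul_0, emul_1, emul_2, emul_3, omul_0, omul_1, omul_2, omul_3, eomul_0, eomul_1, eomul_2, eomul_3, Prod.fst_add, Prod.snd_add, Prod.fst_neg, Prod.snd_neg, Pi.add_apply, Pi.neg_apply, Pi.zero_apply, Prod.fst_zero, Prod.snd_zero, Derivation.map_one_eq_zero, map_add, map_sub, map_neg, map_zero, hB3_0, hB3_1, hB3_2, hB3_3] at hc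
    first
      | linear_combination hc
      | linear_combination -hc
      | (rw [ha3]; first | linear_combination hc | linear_combination -hc)
  have hC_0 : ∀ f : Z, (d (fxi f 0)).1 0 = b * f := by
    intro f
    have h := q (fw f 0) (fxi (1:Z) 0)
    rw [mwx_0_0 δ] at h
    have hc := congr_fun (congrArg Prod.fst h) 0
    simp [hz, hneg, hwf, hxs, jmul, jsig_fst, jsig_snd, fw_fst, fw_snd, fxi_fst, fxi_snd, fw_neg, emul_0, emul_1, emul_2, emul_3, omul_0, omul_1, omul_2, omul_3, eomul_0, eomul_1, eomul_2, eomul_3, Prod.fst_add, Prod.snd_add, Prod.fst_neg, Prod.snd_neg, Pi.add_apply, Pi.neg_apply, Pi.zero_apply, Prod.fst_zero, Prod.snd_zero, Derivation.map_one_eq_zero, map_add, map_sub, map_neg, map_zero, hA_0, hA_1, hA_2, hA_3, hC1_0, hC1_1, hC1_2, hC1_3] at hc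
    first | linear_combination hc | linear_combination -hc
  have hC_1 : ∀ f : Z, (d (fxi f 0)).1 1 = δ a1 * f - a1 * δ f := by
    intro f
    have h := q (fw f 0) (fxi (1:Z) 0)
    rw [mwx_0_0 δ] at h
    have hc := congr_fun (congrArg Prod.fst h) 1
    simp [hz, hneg, hwf, hxs, jmul, jsig_fst, jsig_snd, fw_fst, fw_snd, fxi_fst, fxi_snd, fw_neg, emul_0, emul_1, emul_2, emul_3, omul_0, omul_1, omul_2, omul_3, eomul_0, eomul_1, eomul_2, eomul_3, Prod.fst_add, Prod.snd_add, Prod.fst_neg, Prod.snd_neg, Pi.add_apply, Pi.neg_apply, Pi.zero_apply, Prod.fst_zero, Prod.snd_zero, Derivation.map_one_eq_zero, map_add, map_sub, map_neg, map_zero, hA_0, hA_1, hA_2, hA_3, hC1_0, hC1_1, hC1_2, hC1_3] at hc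
    first | linear_combination hc | linear_combination -hc
  have hC_2 : ∀ f : Z, (d (fxi f 0)).1 2 = δ a2 * f - a2 * δ f := by
    intro f
    have h := q (fw f 0) (fxi (1:Z) 0)
    rw [mwx_0_0 δ] at h
    have hc := congr_fun (congrArg Prod.fst h) 2
    simp [hz, hneg, hwf, hxs, jmul, jsig_fst, jsig_snd, fw_fst, fw_snd, fxi_fst, fxi_snd, fw_neg, emul_0, emul_1, emul_2, emul_3, omul_0, omul_1, omul_2, omul_3, eomul_0, eomul_1, eomul_2, eomul_3, Prod.fst_add, Prod.snd_add, Prod.fst_neg, Prod.snd_neg, Pi.add_apply, Pi.neg_apply, Pi.zero_apply, Prod.fst_zero, Prod.snd_zero, Derivation.map_one_eq_zero, map_add, map_sub, map_neg, map_zero, hA_0, hA_1, hA_2, hA_3, hC1_0, hC1_1, hC1_2, hC1_3] at hc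
    first | linear_combination hc | linear_combination -hc
  have hC_3 : ∀ f : Z, (d (fxi f 0)).1 3 = δ a3 * f - a3 * δ f := by
    intro f
    have h := q (fw f 0) (fxi (1:Z) 0)
    rw [mwx_0_0 δ] at h
    have hc := congr_fun (congrArg Prod.fst h) 3
    simp [hz, hneg, hwf, hxs, jmul, jsig_fst, jsig_snd, fw_fst, fw_snd, fxi_fst, fxi_snd, fw_neg, emul_0, emul_1, emul_2, emul_3, omul_0, omul_1, omul_2, omul_3, eomul_0, eomul_1, eomul_2, eomul_3, Prod.fst_add, Prod.snd_add, Prod.fst_neg, Prod.snd_neg, Pi.add_apply, Pi.neg_apply, Pi.zero_apply, Prod.fst_zero, Prod.snd_zero, Derivation.map_one_eq_zero, map_add, map_sub, map_neg, map_zero, hA_0, hA_1, hA_2, hA_3, hC1_0, hC1_1, hC1_2, hC1_3] at hc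
    first | linear_combination hc | linear_combination -hc
  have hE1_1c : (d (fxi (1:Z) 1)).1 1 = 0 := by
    have h := q (fw (1:Z) 1) (fxi (1:Z) 1)
    rw [mwx_1_1 δ] at h
    have hc := congr_fun (congrArg Prod.fst h) 0
    simp [hz, hneg, hwf, hxs, jmul, jsig_fst, jsig_snd, fw_fst, fw_snd, fxi_fst, fxi_snd, fw_neg, emul_0, emul_1, emul_2, emul_3, omul_0, omul_1, omul_2, omul_3, eomul_0, eomul_1, eomul_2, eomul_3, Prod.fst_add, Prod.snd_add, Prod.fst_neg, Prod.snd_neg, Pi.add_apply, Pi.neg_apply, Pi.zero_apply, Prod.fst_zero, Prod.snd_zero, Derivation.map_one_eq_zero, map_add, map_sub, map_neg, map_zero, hB1_0] at hc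
    first | linear_combination hc | linear_combination -hc
  have hE1_0c : (d (fxi (1:Z) 1)).1 0 = -a1 := by
    have h := q (fw (1:Z) 1) (fxi (1:Z) 1)
    rw [mwx_1_1 δ] at h
    have hc := congr_fun (congrArg Prod.fst h) 1
    simp [hz, hneg, hwf, hxs, jmul, jsig_fst, jsig_snd, fw_fst, fw_snd, fxi_fst, fxi_snd, fw_neg, emul_0, emul_1, emul_2, emul_3, omul_0, omul_1, omul_2, omul_3, eomul_0, eomul_1, eomul_2, eomul_3, Prod.fst_add, Prod.snd_add, Prod.fst_neg, Prod.snd_neg, Pi.add_apply, Pi.neg_apply, Pi.zero_apply, Prod.fst_zero, Prod.snd_zero, Derivation.map_one_eq_zero, map_add, map_sub, map_neg, map_zero, hB1_0] at hc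
    first
      | linear_combination hc
      | linear_combination -hc
      | (rw [ha1]; first | linear_combination hc | linear_combination -hc)
  have hE2_2c : (d (fxi (1:Z) 2)).1 2 = 0 := by
    have h := q (fw (1:Z) 2) (fxi (1:Z) 2)
    rw [mwx_2_2 δ] at h
    have hc := congr_fun (congrArg Prod.fst h) 0
    simp [hz, hneg, hwf, hxs, jmul, jsig_fst, jsig_snd, fw_fst, fw_snd, fxi_fst, fxi_snd, fw_neg, emul_0, emul_1, emul_2, emul_3, omul_0, omul_1, omul_2, omul_3, eomul_0, eomul_1, eomul_2, eomul_3, Prod.fst_add, Prod.snd_add, Prod.fst_neg, Prod.snd_neg, Pi.add_apply, Pi.neg_apply, Pi.zero_apply, Prod.fst_zero, Prod.snd_zero, Derivation.map_one_eq_zero, map_add, map_sub, map_neg, map_zero, hB2_0] at hc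
    first | linear_combination hc | linear_combination -hc
  have hE2_0c : (d (fxi (1:Z) 2)).1 0 = -a2 := by
    have h := q (fw (1:Z) 2) (fxi (1:Z) 2)
    rw [mwx_2_2 δ] at h
    have hc := congr_fun (congrArg Prod.fst h) 2
    simp [hz, hneg, hwf, hxs, jmul, jsig_fst, jsig_snd, fw_fst, fw_snd, fxi_fst, fxi_snd, fw_neg, emul_0, emul_1, emul_2, emul_3, omul_0, omul_1, omul_2, omul_3, eomul_0, eomul_1, eomul_2, eomul_3, Prod.fst_add, Prod.snd_add, Prod.fst_neg, Prod.snd_neg, Pi.add_apply, Pi.neg_apply, Pi.zero_apply, Prod.fst_zero, Prod.snd_zero, Derivation.map_one_eq_zero, map_add, map_sub, map_neg, map_zero, hB2_0] at hc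
    first
      | linear_combination hc
      | linear_combination -hc
      | (rw [ha2]; first | linear_combination hc | linear_combination -hc)
  have hE3_3c : (d (fxi (1:Z) 3)).1 3 = 0 := by
    have h := q (fw (1:Z) 3) (fxi (1:Z) 3)
    rw [mwx_3_3 δ] at h
    have hc := congr_fun (congrArg Prod.fst h) 0
    simp [hz, hneg, hwf, hxs, jmul, jsig_fst, jsig_snd, fw_fst, fw_snd, fxi_fst, fxi_snd, fw_neg, emul_0, emul_1, emul_2, emul_3, omul_0, omul_1, omul_2, omul_3, eomul_0, eomul_1, eomul_2, eomul_3, Prod.fst_add, Prod.snd_add, Prod.fst_neg, Prod.snd_neg, Pi.add_apply, Pi.neg_apply, Pi.zero_apply, Prod.fst_zero, Prod.snd_zero, Derivation.map_one_eq_zero, map_add, map_sub, map_neg, map_zero, hB3_0] at hc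
    first | linear_combination hc | linear_combination -hc
  have hE3_0c : (d (fxi (1:Z) 3)).1 0 = a3 := by
    have h := q (fw (1:Z) 3) (fxi (1:Z) 3)
    rw [mwx_3_3 δ] at h
    have hc := congr_fun (congrArg Prod.fst h) 3
    simp [hz, hneg, hwf, hxs, jmul, jsig_fst, jsig_snd, fw_fst, fw_snd, fxi_fst, fxi_snd, fw_neg, emul_0, emul_1, emul_2, emul_3, omul_0, omul_1, omul_2, omul_3, eomul_0, eomul_1, eomul_2, eomul_3, Prod.fst_add, Prod.snd_add, Prod.fst_neg, Prod.snd_neg, Pi.add_apply, Pi.neg_apply, Pi.zero_apply, Prod.fst_zero, Prod.snd_zero, Derivation.map_one_eq_zero, map_add, map_sub, map_neg, map_zero, hB3_0] at hc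
    first
      | linear_combination hc
      | linear_combination -hc
      | (rw [ha3]; first | linear_combination hc | linear_combination -hc)
  have hE1_3c : (d (fxi (1:Z) 1)).1 3 = a2 := by
    have h := q (fxi (1:Z) 1) (fxi (1:Z) 2)
    rw [mxx_1_2 δ] at h
    have hc := congr_fun (congrArg Prod.snd h) 1
    simp [hz, hneg, hwf, hxs, jmul, jsig_fst, jsig_snd, fw_fst, fw_snd, fxi_fst, fxi_snd, fw_neg, emul_0, emul_1, emul_2, emul_3, omul_0, omul_1, omul_2, omul_3, eomul_0, eomul_1, eomul_2, eomul_3, Prod.fst_add, Prod.snd_add, Prod.fst_neg, Prod.snd_neg, Pi.add_apply, Pi.neg_apply, Pi.zero_apply, Prod.fst_zero, Prod.snd_zero, Derivation.map_one_eq_zero, map_add, map_sub, map_neg, map_zero, hE2_0c] at hc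
    first | linear_combination hc | linear_combination -hc
  have hE2_3c : (d (fxi (1:Z) 2)).1 3 = -a1 := by
    have h := q (fxi (1:Z) 1) (fxi (1:Z) 2)
    rw [mxx_1_2 δ] at h
    have hc := congr_fun (congrArg Prod.snd h) 2
    simp [hz, hneg, hwf, hxs, jmul, jsig_fst, jsig_snd, fw_fst, fw_snd, fxi_fst, fxi_snd, fw_neg, emul_0, emul_1, emul_2, emul_3, omul_0, omul_1, omul_2, omul_3, eomul_0, eomul_1, eomul_2, eomul_3, Prod.fst_add, Prod.snd_add, Prod.fst_neg, Prod.snd_neg, Pi.add_apply, Pi.neg_apply, Pi.zero_apply, Prod.fst_zero, Prod.snd_zero, Derivation.map_one_eq_zero, map_add, map_sub, map_neg, map_zero, hE1_0c] at hc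
    first | linear_combination hc | linear_combination -hc
  have hE1_2c : (d (fxi (1:Z) 1)).1 2 = a3 := by
    have h := q (fxi (1:Z) 1) (fxi (1:Z) 3)
    rw [mxx_1_3 δ] at h
    have hc := congr_fun (congrArg Prod.snd h) 1
    simp [hz, hneg, hwf, hxs, jmul, jsig_fst, jsig_snd, fw_fst, fw_snd, fxi_fst, fxi_snd, fw_neg, emul_0, emul_1, emul_2, emul_3, omul_0, omul_1, omul_2, omul_3, eomul_0, eomul_1, eomul_2, eomul_3, Prod.fst_add, Prod.snd_add, Prod.fst_neg, Prod.snd_neg, Pi.add_apply, Pi.neg_apply, Pi.zero_apply, Prod.fst_zero, Prod.snd_zero, Derivation.map_one_eq_zero, map_add, map_sub, map_neg, map_zero, hE3_0c] at hc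
    first | linear_combination hc | linear_combination -hc
  have hE3_2c : (d (fxi (1:Z) 3)).1 2 = -a1 := by
    have h := q (fxi (1:Z) 1) (fxi (1:Z) 3)
    rw [mxx_1_3 δ] at h
    have hc := congr_fun (congrArg Prod.snd h) 3
    simp [hz, hneg, hwf, hxs, jmul, jsig_fst, jsig_snd, fw_fst, fw_snd, fxi_fst, fxi_snd, fw_neg, emul_0, emul_1, emul_2, emul_3, omul_0, omul_1, omul_2, omul_3, eomul_0, eomul_1, eomul_2, eomul_3, Prod.fst_add, Prod.snd_add, Prod.fst_neg, Prod.snd_neg, Pi.add_apply, Pi.neg_apply, Pi.zero_apply, Prod.fst_zero, Prod.snd_zero, Derivation.map_one_eq_zero, map_add, map_sub, map_neg, map_zero, hE1_0c] at hc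
    first | linear_combination hc | linear_combination -hc
  have hE2_1c : (d (fxi (1:Z) 2)).1 1 = -a3 := by
    have h := q (fxi (1:Z) 2) (fxi (1:Z) 3)
    rw [mxx_2_3 δ] at h
    have hc := congr_fun (congrArg Prod.snd h) 2
    simp [hz, hneg, hwf, hxs, jmul, jsig_fst, jsig_snd, fw_fst, fw_snd, fxi_fst, fxi_snd, fw_neg, emul_0, emul_1, emul_2, emul_3, omul_0, omul_1, omul_2, omul_3, eomul_0, eomul_1, eomul_2, eomul_3, Prod.fst_add, Prod.snd_add, Prod.fst_neg, Prod.snd_neg, Pi.add_apply, Pi.neg_apply, Pi.zero_apply, Prod.fst_zero, Prod.snd_zero, Derivation.map_one_eq_zero, map_add, map_sub, map_neg, map_zero, hE3_0c] at hc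
    first | linear_combination hc | linear_combination -hc
  have hE3_1c : (d (fxi (1:Z) 3)).1 1 = a2 := by
    have h := q (fxi (1:Z) 2) (fxi (1:Z) 3)
    rw [mxx_2_3 δ] at h
    have hc := congr_fun (congrArg Prod.snd h) 3
    simp [hz, hneg, hwf, hxs, jmul, jsig_fst, jsig_snd, fw_fst, fw_snd, fxi_fst, fxi_snd, fw_neg, emul_0, emul_1, emul_2, emul_3, omul_0, omul_1, omul_2, omul_3, eomul_0, eomul_1, eomul_2, eomul_3, Prod.fst_add, Prod.snd_add, Prod.fst_neg, Prod.snd_neg, Pi.add_apply, Pi.neg_apply, Pi.zero_apply, Prod.fst_zero, Prod.snd_zero, Derivation.map_one_eq_zero, map_add, map_sub, map_neg, map_zero, hE2_0c] at hc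
    first | linear_combination hc | linear_combination -hc
  have hE1_0 : ∀ f : Z, (d (fxi f 1)).1 0 = -(a1 * f) := by
    intro f
    have h := q (fw f 0) (fxi (1:Z) 1)
    rw [mwx_0_1 δ] at h
    have hc := congr_fun (congrArg Prod.fst h) 0
    simp [hz, hneg, hwf, hxs, jmul, jsig_fst, jsig_snd, fw_fst, fw_snd, fxi_fst, fxi_snd, fw_neg, emul_0, emul_1, emul_2, emul_3, omul_0, omul_1, omul_2, omul_3, eomul_0, eomul_1, eomul_2, eomul_3, Prod.fst_add, Prod.snd_add, Prod.fst_neg, Prod.snd_neg, Pi.add_apply, Pi.neg_apply, Pi.zero_apply, Prod.fst_zero, Prod.snd_zero, Derivation.map_one_eq_zero, map_add, map_sub, map_neg, map_zero, hA_0, hE1_0c, hE1_1c, hE1_2c, hE1_3c] at hc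
    first | linear_combination hc | linear_combination -hc
  have hE1_1 : ∀ f : Z, (d (fxi f 1)).1 1 = 0 := by
    intro f
    have h := q (fw f 0) (fxi (1:Z) 1)
    rw [mwx_0_1 δ] at h
    have hc := congr_fun (congrArg Prod.fst h) 1
    simp [hz, hneg, hwf, hxs, jmul, jsig_fst, jsig_snd, fw_fst, fw_snd, fxi_fst, fxi_snd, fw_neg, emul_0, emul_1, emul_2, emul_3, omul_0, omul_1, omul_2, omul_3, eomul_0, eomul_1, eomul_2, eomul_3, Prod.fst_add, Prod.snd_add, Prod.fst_neg, Prod.snd_neg, Pi.add_apply, Pi.neg_apply, Pi.zero_apply, Prod.fst_zero, Prod.snd_zero, Derivation.map_one_eq_zero, map_add, map_sub, map_neg, map_zero, hA_0, hE1_0c, hE1_1c, hE1_2c, hE1_3c] at hc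
    first | linear_combination hc | linear_combination -hc
  have hE1_2 : ∀ f : Z, (d (fxi f 1)).1 2 = a3 * f := by
    intro f
    have h := q (fw f 0) (fxi (1:Z) 1)
    rw [mwx_0_1 δ] at h
    have hc := congr_fun (congrArg Prod.fst h) 2
    simp [hz, hneg, hwf, hxs, jmul, jsig_fst, jsig_snd, fw_fst, fw_snd, fxi_fst, fxi_snd, fw_neg, emul_0, emul_1, emul_2, emul_3, omul_0, omul_1, omul_2, omul_3, eomul_0, eomul_1, eomul_2, eomul_3, Prod.fst_add, Prod.snd_add, Prod.fst_neg, Prod.snd_neg, Pi.add_apply, Pi.neg_apply, Pi.zero_apply, Prod.fst_zero, Prod.snd_zero, Derivation.map_one_eq_zero, map_add, map_sub, map_neg, map_zero, hA_0, hE1_0c, hE1_1c, hE1_2c, hE1_3c] at hc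
    first | linear_combination hc | linear_combination -hc
  have hE1_3 : ∀ f : Z, (d (fxi f 1)).1 3 = a2 * f := by
    intro f
    have h := q (fw f 0) (fxi (1:Z) 1)
    rw [mwx_0_1 δ] at h
    have hc := congr_fun (congrArg Prod.fst h) 3
    simp [hz, hneg, hwf, hxs, jmul, jsig_fst, jsig_snd, fw_fst, fw_snd, fxi_fst, fxi_snd, fw_neg, emul_0, emul_1, emul_2, emul_3, omul_0, omul_1, omul_2, omul_3, eomul_0, eomul_1, eomul_2, eomul_3, Prod.fst_add, Prod.snd_add, Prod.fst_neg, Prod.snd_neg, Pi.add_apply, Pi.neg_apply, Pi.zero_apply, Prod.fst_zero, Prod.snd_zero, Derivation.map_one_eq_zero, map_add, map_sub, map_neg, map_zero, hA_0, hE1_0c, hE1_1c, hE1_2c, hE1_3c] at hc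
    first | linear_combination hc | linear_combination -hc
  have hE2_0 : ∀ f : Z, (d (fxi f 2)).1 0 = -(a2 * f) := by
    intro f
    have h := q (fw f 0) (fxi (1:Z) 2)
    rw [mwx_0_2 δ] at h
    have hc := congr_fun (congrArg Prod.fst h) 0
    simp [hz, hneg, hwf, hxs, jmul, jsig_fst, jsig_snd, fw_fst, fw_snd, fxi_fst, fxi_snd, fw_neg, emul_0, emul_1, emul_2, emul_3, omul_0, omul_1, omul_2, omul_3, eomul_0, eomul_1, eomul_2, eomul_3, Prod.fst_add, Prod.snd_add, Prod.fst_neg, Prod.snd_neg, Pi.add_apply, Pi.neg_apply, Pi.zero_apply, Prod.fst_zero, Prod.snd_zero, Derivation.map_one_eq_zero, map_add, map_sub, map_neg, map_zero, hA_0, hE2_0c, hE2_1c, hE2_2c, hE2_3c] at hc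
    first | linear_combination hc | linear_combination -hc
  have hE2_1 : ∀ f : Z, (d (fxi f 2)).1 1 = -(a3 * f) := by
    intro f
    have h := q (fw f 0) (fxi (1:Z) 2)
    rw [mwx_0_2 δ] at h
    have hc := congr_fun (congrArg Prod.fst h) 1
    simp [hz, hneg, hwf, hxs, jmul, jsig_fst, jsig_snd, fw_fst, fw_snd, fxi_fst, fxi_snd, fw_neg, emul_0, emul_1, emul_2, emul_3, omul_0, omul_1, omul_2, omul_3, eomul_0, eomul_1, eomul_2, eomul_3, Prod.fst_add, Prod.snd_add, Prod.fst_neg, Prod.snd_neg, Pi.add_apply, Pi.neg_apply, Pi.zero_apply, Prod.fst_zero, Prod.snd_zero, Derivation.map_one_eq_zero, map_add, map_sub, map_neg, map_zero, hA_0, hE2_0c, hE2_1c, hE2_2c, hE2_3c] at hc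
    first | linear_combination hc | linear_combination -hc
  have hE2_2 : ∀ f : Z, (d (fxi f 2)).1 2 = 0 := by
    intro f
    have h := q (fw f 0) (fxi (1:Z) 2)
    rw [mwx_0_2 δ] at h
    have hc := congr_fun (congrArg Prod.fst h) 2
    simp [hz, hneg, hwf, hxs, jmul, jsig_fst, jsig_snd, fw_fst, fw_snd, fxi_fst, fxi_snd, fw_neg, emul_0, emul_1, emul_2, emul_3, omul_0, omul_1, omul_2, omul_3, eomul_0, eomul_1, eomul_2, eomul_3, Prod.fst_add, Prod.snd_add, Prod.fst_neg, Prod.snd_neg, Pi.add_apply, Pi.neg_apply, Pi.zero_apply, Prod.fst_zero, Prod.snd_zero, Derivation.map_one_eq_zero, map_add, map_sub, map_neg, map_zero, hA_0, hE2_0c, hE2_1c, hE2_2c, hE2_3c] at hc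
    first | linear_combination hc | linear_combination -hc
  have hE2_3 : ∀ f : Z, (d (fxi f 2)).1 3 = -(a1 * f) := by
    intro f
    have h := q (fw f 0) (fxi (1:Z) 2)
    rw [mwx_0_2 δ] at h
    have hc := congr_fun (congrArg Prod.fst h) 3
    simp [hz, hneg, hwf, hxs, jmul, jsig_fst, jsig_snd, fw_fst, fw_snd, fxi_fst, fxi_snd, fw_neg, emul_0, emul_1, emul_2, emul_3, omul_0, omul_1, omul_2, omul_3, eomul_0, eomul_1, eomul_2, eomul_3, Prod.fst_add, Prod.snd_add, Prod.fst_neg, Prod.snd_neg, Pi.add_apply, Pi.neg_apply, Pi.zero_apply, Prod.fst_zero, Prod.snd_zero, Derivation.map_one_eq_zero, map_add, map_sub, map_neg, map_zero, hA_0, hE2_0c, hE2_1c, hE2_2c, hE2_3c] at hc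
    first | linear_combination hc | linear_combination -hc
  have hE3_0 : ∀ f : Z, (d (fxi f 3)).1 0 = a3 * f := by
    intro f
    have h := q (fw f 0) (fxi (1:Z) 3)
    rw [mwx_0_3 δ] at h
    have hc := congr_fun (congrArg Prod.fst h) 0
    simp [hz, hneg, hwf, hxs, jmul, jsig_fst, jsig_snd, fw_fst, fw_snd, fxi_fst, fxi_snd, fw_neg, emul_0, emul_1, emul_2, emul_3, omul_0, omul_1, omul_2, omul_3, eomul_0, eomul_1, eomul_2, eomul_3, Prod.fst_add, Prod.snd_add, Prod.fst_neg, Prod.snd_neg, Pi.add_apply, Pi.neg_apply, Pi.zero_apply, Prod.fst_zero, Prod.snd_zero, Derivation.map_one_eq_zero, map_add, map_sub, map_neg, map_zero, hA_0, hE3_0c, hE3_1c, hE3_2c, hE3_3c] at hc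
    first | linear_combination hc | linear_combination -hc
  have hE3_1 : ∀ f : Z, (d (fxi f 3)).1 1 = a2 * f := by
    intro f
    have h := q (fw f 0) (fxi (1:Z) 3)
    rw [mwx_0_3 δ] at h
    have hc := congr_fun (congrArg Prod.fst h) 1
    simp [hz, hneg, hwf, hxs, jmul, jsig_fst, jsig_snd, fw_fst, fw_snd, fxi_fst, fxi_snd, fw_neg, emul_0, emul_1, emul_2, emul_3, omul_0, omul_1, omul_2, omul_3, eomul_0, eomul_1, eomul_2, eomul_3, Prod.fst_add, Prod.snd_add, Prod.fst_neg, Prod.snd_neg, Pi.add_apply, Pi.neg_apply, Pi.zero_apply, Prod.fst_zero, Prod.snd_zero, Derivation.map_one_eq_zero, map_add, map_sub, map_neg, map_zero, hA_0, hE3_0c, hE3_1c, hE3_2c, hE3_3c] at hc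
    first | linear_combination hc | linear_combination -hc
  have hE3_2 : ∀ f : Z, (d (fxi f 3)).1 2 = -(a1 * f) := by
    intro f
    have h := q (fw f 0) (fxi (1:Z) 3)
    rw [mwx_0_3 δ] at h
    have hc := congr_fun (congrArg Prod.fst h) 2
    simp [hz, hneg, hwf, hxs, jmul, jsig_fst, jsig_snd, fw_fst, fw_snd, fxi_fst, fxi_snd, fw_neg, emul_0, emul_1, emul_2, emul_3, omul_0, omul_1, omul_2, omul_3, eomul_0, eomul_1, eomul_2, eomul_3, Prod.fst_add, Prod.snd_add, Prod.fst_neg, Prod.snd_neg, Pi.add_apply, Pi.neg_apply, Pi.zero_apply, Prod.fst_zero, Prod.snd_zero, Derivation.map_one_eq_zero, map_add, map_sub, map_neg, map_zero, hA_0, hE3_0c, hE3_1c, hE3_2c, hE3_3c] at hc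
    first | linear_combination hc | linear_combination -hc
  have hE3_3 : ∀ f : Z, (d (fxi f 3)).1 3 = 0 := by
    intro f
    have h := q (fw f 0) (fxi (1:Z) 3)
    rw [mwx_0_3 δ] at h
    have hc := congr_fun (congrArg Prod.fst h) 3
    simp [hz, hneg, hwf, hxs, jmul, jsig_fst, jsig_snd, fw_fst, fw_snd, fxi_fst, fxi_snd, fw_neg, emul_0, emul_1, emul_2, emul_3, omul_0, omul_1, omul_2, omul_3, eomul_0, eomul_1, eomul_2, eomul_3, Prod.fst_add, Prod.snd_add, Prod.fst_neg, Prod.snd_neg, Pi.add_apply, Pi.neg_apply, Pi.zero_apply, Prod.fst_zero, Prod.snd_zero, Derivation.map_one_eq_zero, map_add, map_sub, map_neg, map_zero, hA_0, hE3_0c, hE3_1c, hE3_2c, hE3_3c] at hc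
    first | linear_combination hc | linear_combination -hc
  refine ⟨b, a1, a2, a3, ?_⟩
  funext u
  have e := congrArg d (decomp u)
  rw [hadd, hadd, hadd, hadd, hadd, hadd, hadd] at e
  rw [e]
  refine jext ?_ ?_ ?_ ?_ ?_ ?_ ?_ ?_ <;>
    simp [hwf, hxs, hA_0, hA_1, hA_2, hA_3, hB1_0, hB1_1, hB1_2, hB1_3, hB2_0, hB2_1, hB2_2, hB2_3, hB3_0, hB3_1, hB3_2, hB3_3, hC_0, hC_1, hC_2, hC_3, hE1_0, hE1_1, hE1_2, hE1_3, hE2_0, hE2_1, hE2_2, hE2_3, hE3_0, hE3_1, hE3_2, hE3_3, OddD_1_0, OddD_1_1, OddD_1_2, OddD_1_3, OddD_2_0, OddD_2_1, OddD_2_2, OddD_2_3, Prod.fst_add, Prod.snd_add, Pi.add_apply, Pi.zero_apply] <;> ring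

lemma OddD_param_add (δ : Derivation F Z Z) (b a1 a2 a3 b' a1' a2' a3' : Z) :
    OddD (⇑δ) (b+b') (a1+a1') (a2+a2') (a3+a3') =
      OddD (⇑δ) b a1 a2 a3 + OddD (⇑δ) b' a1' a2' a3' := by
  funext u
  refine jext ?_ ?_ ?_ ?_ ?_ ?_ ?_ ?_ <;>
    simp only [OddD_1_0, OddD_1_1, OddD_1_2, OddD_1_3, OddD_2_0, OddD_2_1, OddD_2_2, OddD_2_3, jmul, Dgen, jsig_fst, jsig_snd, emul_0, emul_1, emul_2, emul_3, omul_0, omul_1, omul_2, omul_3, eomul_0, eomul_1, eomul_2, eomul_3, Prod.fst_add, Prod.snd_add, Prod.fst_sub, Prod.snd_sub, Pi.add_apply, Pi.sub_apply, Pi.neg_apply, Pi.zero_apply, Prod.fst_zero, Prod.snd_zero, map_add, map_sub, map_neg, map_zero, Derivation.leibniz, Derivation.map_one_eq_zero, smul_eq_mul, one_smul, Pi.add_apply] <;> ring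

lemma OddD_param_smul (δ : Derivation F Z Z) (c : F) (b a1 a2 a3 : Z) :
    OddD (⇑δ) (c • b) (c • a1) (c • a2) (c • a3) = c • OddD (⇑δ) b a1 a2 a3 := by
  funext u
  refine jext ?_ ?_ ?_ ?_ ?_ ?_ ?_ ?_ <;>
    simp only [OddD_1_0, OddD_1_1, OddD_1_2, OddD_1_3, OddD_2_0, OddD_2_1, OddD_2_2, OddD_2_3,
      Pi.smul_apply, Prod.smul_fst, Prod.smul_snd, map_smul, Derivation.map_smul] <;>
    simp only [Algebra.smul_def] <;> ring

variable (F) in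
def OddL (δ : Derivation F Z Z) : (Fin 4 → Z) →ₗ[F] (J Z → J Z) where
  toFun t := OddD (⇑δ) (t 0) (t 1) (t 2) (t 3)
  map_add' t s := by simpa using OddD_param_add δ (t 0) (t 1) (t 2) (t 3) (s 0) (s 1) (s 2) (s 3)
  map_smul' c t := by simpa using OddD_param_smul δ c (t 0) (t 1) (t 2) (t 3)

lemma OddD_decomp (δ : Derivation F Z Z) (b a1 a2 a3 : Z) :
    OddD (⇑δ) b a1 a2 a3 = Dgen (⇑δ) 1 (fw 1 1) (fxi b 1) + Dgen (⇑δ) 1 (fw 1 1) (fxi a1 0)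
      + Dgen (⇑δ) 1 (fw 1 2) (fxi a2 0) + Dgen (⇑δ) 1 (fw 1 3) (fxi a3 0) := by
  funext c
  refine jext ?_ ?_ ?_ ?_ ?_ ?_ ?_ ?_ <;>
    simp [OddD_1_0, OddD_1_1, OddD_1_2, OddD_1_3, OddD_2_0, OddD_2_1, OddD_2_2, OddD_2_3, jmul, Dgen, jsig_fst, jsig_snd, emul_0, emul_1, emul_2, emul_3, omul_0, omul_1, omul_2, omul_3, eomul_0, eomul_1, eomul_2, eomul_3, Prod.fst_add, Prod.snd_add, Prod.fst_sub, Prod.snd_sub, Pi.add_apply, Pi.sub_apply, Pi.neg_apply, Pi.zero_apply, Prod.fst_zero, Prod.snd_zero, map_add, map_sub, map_neg, map_zero, Derivation.leibniz, Derivation.map_one_eq_zero, smul_eq_mul, one_smul, fw_fst, fw_snd, fxi_fst, fxi_snd] <;> ring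

lemma OddD_mem_span (δ : Derivation F Z Z) (b a1 a2 a3 : Z) :
    OddD (⇑δ) b a1 a2 a3 ∈ Submodule.span F (InderSet1 (⇑δ)) := by
  rw [OddD_decomp]
  have mem : ∀ (k : Fin 4) (z : Z), Dgen (⇑δ) 1 (fw 1 k) (fxi z k) ∈ InderSet1 (⇑δ) :=
    fun k z => ⟨fw 1 k, fxi z k, false, rfl, rfl, rfl⟩
  exact Submodule.add_mem _ (Submodule.add_mem _ (Submodule.add_mem _
      (Submodule.subset_span (mem 1 b)) (Submodule.subset_span (⟨fw 1 1, fxi a1 0, false, rfl, rfl, rfl⟩)))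
      (Submodule.subset_span (⟨fw 1 2, fxi a2 0, false, rfl, rfl, rfl⟩)))
    (Submodule.subset_span (⟨fw 1 3, fxi a3 0, false, rfl, rfl, rfl⟩))

lemma gen_eq' (δ : Derivation F Z Z) (u v : J Z) (hu : u.2 = 0) (hv : v.1 = 0) :
    Dgen (⇑δ) 1 u v = OddL F δ
      ![δ (u.1 0) * v.2 0 + u.1 1 * v.2 1 + u.1 2 * v.2 2 - u.1 3 * v.2 3,
        u.1 1 * v.2 0, u.1 2 * v.2 0, u.1 3 * v.2 0] := by
  have h1 : u = ((u.1, 0) : J Z) := Prod.ext rfl hu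
  have h2 : v = ((0, v.2) : J Z) := Prod.ext hv rfl
  rw [h1, h2, gen_eq]
  simp [OddL]

theorem span_eq_range (δ : Derivation F Z Z) :
    Submodule.span F (InderSet1 (⇑δ)) = LinearMap.range (OddL F δ) := by
  apply le_antisymm
  · rw [Submodule.span_le]
    rintro dd ⟨u, v, p, hu, hv, rfl⟩
    cases p with
    | false =>
      simp only [IsHom, if_neg Bool.false_ne_true, Bool.not_false, if_pos rfl] at hu hv
      rw [gen_eq' δ u v hu hv]
      exact ⟨_, rfl⟩
    | true =>
      simp only [IsHom, if_pos rfl, Bool.not_true, if_neg Bool.false_ne_true] at hu hv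
      rw [Dgen_swap, gen_eq' δ v u hv hu, ← map_neg]
      exact ⟨_, rfl⟩
  · rintro dd ⟨t, rfl⟩
    exact OddD_mem_span δ (t 0) (t 1) (t 2) (t 3)

theorem der1_set_eq (δ : Derivation F Z Z) :
    {d : J Z → J Z | IsDer1 F (⇑δ) d} = (LinearMap.range (OddL F δ) : Set (J Z → J Z)) := by
  ext dd
  constructor
  · intro hd
    obtain ⟨b, a1, a2, a3, rfl⟩ := isDer1_structure δ dd hd
    exact ⟨![b, a1, a2, a3], by simp [OddL]⟩
  · rintro ⟨t, rfl⟩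
    exact OddD_isDer1 δ (t 0) (t 1) (t 2) (t 3)

lemma span_trick (δ : Derivation F Z Z)
    (hspan : Submodule.span F {z : Z | ∃ f g : Z, z = f * δ g} = ⊤) (c : Z)
    (h : ∀ f, c * δ f = 0) : c = 0 := by
  have key : ∀ z ∈ Submodule.span F {z : Z | ∃ f g : Z, z = f * δ g}, c * z = 0 := by
    intro z hz
    induction hz using Submodule.span_induction with
    | mem z hz =>
      obtain ⟨f, g, rfl⟩ := hz
      rw [show c * (f * δ g) = f * (c * δ g) by ring, h, mul_zero]
    | zero => simp
    | add x y _ _ hx hy => rw [mul_add, hx, hy, add_zero]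
    | smul a x _ hx => rw [mul_smul_comm, hx, smul_zero]
  simpa using key 1 (by rw [hspan]; trivial)

theorem OddL_inj (δ : Derivation F Z Z)
    (hspan : Submodule.span F {z : Z | ∃ f g : Z, z = f * δ g} = ⊤) :
    Function.Injective (OddL F δ) := by
  have key : ∀ t, OddL F δ t = 0 → t = 0 := by
    intro t h
    have h0 : t 0 = 0 := by
      have := congr_fun (congrArg Prod.fst (congr_fun h (fxi 1 0))) 0
      simpa [OddL, OddD_1_0, fxi_fst, fxi_snd] using this
    have hi : ∀ i : Fin 4, i ≠ 0 → t i = 0 := by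
      intro i hi
      refine span_trick δ hspan (t i) fun f => ?_
      have := congr_fun (congrArg Prod.snd (congr_fun h (fw f 0))) i
      fin_cases i
      · exact absurd rfl hi
      all_goals simpa [OddL, OddD_2_1, OddD_2_2, OddD_2_3, fw_fst, fw_snd, neg_eq_zero] using this
    refine ext4 h0 (hi 1 (by decide)) (hi 2 (by decide)) (hi 3 (by decide))
  intro x y hxy
  have : OddL F δ (x - y) = 0 := by rw [map_sub, hxy, sub_self]
  have := key _ this
  exact sub_eq_zero.mp this

theorem rank_fin4 : Module.rank F (Fin 4 → Z) = 4 * Module.rank F Z := by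
  rw [rank_pi, Cardinal.sum_const]
  simp

theorem part3 (δ : Derivation F Z Z)
    (hspan : Submodule.span F {z : Z | ∃ f g : Z, z = f * δ g} = ⊤) :
    Module.rank F ↥(Submodule.span F {d : J Z → J Z | IsDer1 F (⇑δ) d})
      = 4 * Module.rank F Z := by
  rw [der1_set_eq, Submodule.span_eq, rank_range_of_injective _ (OddL_inj δ hspan), rank_fin4]

lemma char2_trick (h2 : (2:F) ≠ 0) (x : Z) (h : x + x = 0) : x = 0 := by
  have h4 : (2:F) • x = 0 := by rw [two_smul]; exact h
  calc x = (2:F)⁻¹ • ((2:F) • x) := (inv_smul_smul₀ h2 x).symm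
    _ = 0 := by rw [h4, smul_zero]

def tvec : Fin 4 → ZMod 2 × ZMod 2 := ![(0,0),(1,0),(0,1),(1,1)]

lemma idx_tvec : ∀ k : Fin 4, idx (tvec k) = k := by decide

lemma addz (t : ZMod 2 × ZMod 2) : t + ((0,0) : ZMod 2 × ZMod 2) = t := by
  cases t; simp [Prod.ext_iff]

lemma fw_mem_gset (f : Z) (k : Fin 4) : fw f k ∈ gset (tvec k) := by
  intro j hj
  rw [idx_tvec] at hj
  exact ⟨by simp [hj], rfl⟩

lemma fxi_mem_gset (f : Z) (k : Fin 4) : fxi f k ∈ gset (tvec k) := by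
  intro j hj
  rw [idx_tvec] at hj
  exact ⟨rfl, by simp [hj]⟩

@[simp] lemma jtilde_fst (μ : Z → Z) (a : Z) (u : J Z) (k : Fin 4) :
    (jtilde μ a u).1 k = μ (u.1 k) := rfl
@[simp] lemma jtilde_snd_0 (μ : Z → Z) (a : Z) (u : J Z) :
    (jtilde μ a u).2 0 = μ (u.2 0) + a * u.2 0 := by simp [jtilde]
@[simp] lemma jtilde_snd_1 (μ : Z → Z) (a : Z) (u : J Z) :
    (jtilde μ a u).2 1 = μ (u.2 1) - a * u.2 1 := by simp [jtilde]
@[simp] lemma jtilde_snd_2 (μ : Z → Z) (a : Z) (u : J Z) :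
    (jtilde μ a u).2 2 = μ (u.2 2) - a * u.2 2 := by simp [jtilde]
@[simp] lemma jtilde_snd_3 (μ : Z → Z) (a : Z) (u : J Z) :
    (jtilde μ a u).2 3 = μ (u.2 3) - a * u.2 3 := by simp [jtilde]

theorem isDer0_structure (h2 : (2:F) ≠ 0) (δ : Derivation F Z Z)
    (hspan : Submodule.span F {z : Z | ∃ f g : Z, z = f * δ g} = ⊤)
    (d : J Z → J Z) (hd : IsDer0 F (⇑δ) d)
    (hdeg : DerDeg ((0, 0) : ZMod 2 × ZMod 2) d) :
    ∃ (μ : Z → Z) (a : Z),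
      (∀ x y, μ (x + y) = μ x + μ y) ∧ (∀ (c : F) (x : Z), μ (c • x) = c • μ x) ∧
      (∀ x y, μ (x*y) = μ x * y + x * μ y) ∧ μ 0 = 0 ∧
      (∀ x, μ (δ x) = δ (μ x) + 2*(a*δ x)) ∧ d = jtilde μ a := by
  obtain ⟨⟨hadd, hsmul⟩, hp1, hp2, q⟩ := hd
  have hz : d 0 = 0 := by simpa using hsmul 0 0
  have hneg : ∀ u, d (-u) = -d u := fun u => by
    rw [← neg_one_smul F u, hsmul, neg_one_smul]
  have hwf2 : ∀ (f : Z) (k : Fin 4), (d (fw f k)).2 = 0 := fun f k => hp1 _ rfl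
  have hxs2 : ∀ (f : Z) (k : Fin 4), (d (fxi f k)).1 = 0 := fun f k => hp2 _ rfl
  have hsecw : ∀ (f : Z) (k : Fin 4), d (fw f k) ∈ gset (tvec k) := fun f k => by
    have := hdeg (tvec k) (fw f k) (fw_mem_gset f k)
    rwa [addz] at this
  have hsecx : ∀ (f : Z) (k : Fin 4), d (fxi f k) ∈ gset (tvec k) := fun f k => by
    have := hdeg (tvec k) (fxi f k) (fxi_mem_gset f k)
    rwa [addz] at this
  have hwcomp : ∀ (f : Z) (k j : Fin 4), j ≠ k → (d (fw f k)).1 j = 0 := fun f k j hj =>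
    (hsecw f k j (by rwa [idx_tvec])).1
  have hxcomp : ∀ (f : Z) (k j : Fin 4), j ≠ k → (d (fxi f k)).2 j = 0 := fun f k j hj =>
    (hsecx f k j (by rwa [idx_tvec])).2
  obtain ⟨a, ha⟩ : ∃ z : Z, z = (d (fxi (1:Z) 0)).2 0 := ⟨_, rfl⟩
  have pder : ∀ f g : Z, (d (fw (f*g) 0)).1 0 = (d (fw f 0)).1 0 * g + f * (d (fw g 0)).1 0 := by
    intro f g
    have h := q (fw f 0) (fw g 0)
    rw [mww_0_0 δ] at h
    have hc := congr_fun (congrArg Prod.fst h) 0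
    simp [hz, hneg, hwf2, hxs2, hwcomp, hxcomp, jmul, jsig_fst, jsig_snd, fw_fst, fw_snd, fxi_fst, fxi_snd, fw_neg, emul_0, emul_1, emul_2, emul_3, omul_0, omul_1, omul_2, omul_3, eomul_0, eomul_1, eomul_2, eomul_3, Prod.fst_add, Prod.snd_add, Prod.fst_neg, Prod.snd_neg, Pi.add_apply, Pi.neg_apply, Pi.zero_apply, Prod.fst_zero, Prod.snd_zero, Derivation.map_one_eq_zero, map_add, map_sub, map_neg, map_zero] at hc
    first | linear_combination hc | linear_combination -hc
  have pone : (d (fw (1:Z) 0)).1 0 = 0 := by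
    have h := pder 1 1
    simp only [mul_one, one_mul] at h
    linear_combination -h
  have pw1 : ∀ f : Z, (d (fw f 1)).1 1 = (d (fw f 0)).1 0 + f * (d (fw (1:Z) 1)).1 1 := by
    intro f
    have h := q (fw f 0) (fw (1:Z) 1)
    rw [mww_0_1 δ] at h
    have hc := congr_fun (congrArg Prod.fst h) 1
    simp [hz, hneg, hwf2, hxs2, hwcomp, hxcomp, jmul, jsig_fst, jsig_snd, fw_fst, fw_snd, fxi_fst, fxi_snd, fw_neg, emul_0, emul_1, emul_2, emul_3, omul_0, omul_1, omul_2, omul_3, eomul_0, eomul_1, eomul_2, eomul_3, Prod.fst_add, Prod.snd_add, Prod.fst_neg, Prod.snd_neg, Pi.add_apply, Pi.neg_apply, Pi.zero_apply, Prod.fst_zero, Prod.snd_zero, Derivation.map_one_eq_zero, map_add, map_sub, map_neg, map_zero] at hc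
    first | linear_combination hc | linear_combination -hc
  have pw2 : ∀ f : Z, (d (fw f 2)).1 2 = (d (fw f 0)).1 0 + f * (d (fw (1:Z) 2)).1 2 := by
    intro f
    have h := q (fw f 0) (fw (1:Z) 2)
    rw [mww_0_2 δ] at h
    have hc := congr_fun (congrArg Prod.fst h) 2
    simp [hz, hneg, hwf2, hxs2, hwcomp, hxcomp, jmul, jsig_fst, jsig_snd, fw_fst, fw_snd, fxi_fst, fxi_snd, fw_neg, emul_0, emul_1, emul_2, emul_3, omul_0, omul_1, omul_2, omul_3, eomul_0, eomul_1, eomul_2, eomul_3, Prod.fst_add, Prod.snd_add, Prod.fst_neg, Prod.snd_neg, Pi.add_apply, Pi.neg_apply, Pi.zero_apply, Prod.fst_zero, Prod.snd_zero, Derivation.map_one_eq_zero, map_add, map_sub, map_neg, map_zero] at hc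
    first | linear_combination hc | linear_combination -hc
  have pw3 : ∀ f : Z, (d (fw f 3)).1 3 = (d (fw f 0)).1 0 + f * (d (fw (1:Z) 3)).1 3 := by
    intro f
    have h := q (fw f 0) (fw (1:Z) 3)
    rw [mww_0_3 δ] at h
    have hc := congr_fun (congrArg Prod.fst h) 3
    simp [hz, hneg, hwf2, hxs2, hwcomp, hxcomp, jmul, jsig_fst, jsig_snd, fw_fst, fw_snd, fxi_fst, fxi_snd, fw_neg, emul_0, emul_1, emul_2, emul_3, omul_0, omul_1, omul_2, omul_3, eomul_0, eomul_1, eomul_2, eomul_3, Prod.fst_add, Prod.snd_add, Prod.fst_neg, Prod.snd_neg, Pi.add_apply, Pi.neg_apply, Pi.zero_apply, Prod.fst_zero, Prod.snd_zero, Derivation.map_one_eq_zero, map_add, map_sub, map_neg, map_zero] at hc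
    first | linear_combination hc | linear_combination -hc
  have pc1raw : (d (fw (1:Z) 1)).1 1 + (d (fw (1:Z) 1)).1 1 = 0 := by
    have h := q (fw (1:Z) 1) (fw (1:Z) 1)
    rw [mww_1_1 δ] at h
    have hc := congr_fun (congrArg Prod.fst h) 0
    simp [hz, hneg, hwf2, hxs2, hwcomp, hxcomp, jmul, jsig_fst, jsig_snd, fw_fst, fw_snd, fxi_fst, fxi_snd, fw_neg, emul_0, emul_1, emul_2, emul_3, omul_0, omul_1, omul_2, omul_3, eomul_0, eomul_1, eomul_2, eomul_3, Prod.fst_add, Prod.snd_add, Prod.fst_neg, Prod.snd_neg, Pi.add_apply, Pi.neg_apply, Pi.zero_apply, Prod.fst_zero, Prod.snd_zero, Derivation.map_one_eq_zero, map_add, map_sub, map_neg, map_zero, pone] at hc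
    first | linear_combination hc | linear_combination -hc
  have pc1 : (d (fw (1:Z) 1)).1 1 = 0 := char2_trick h2 _ pc1raw
  have pw1' : ∀ f : Z, (d (fw f 1)).1 1 = (d (fw f 0)).1 0 := fun f => by
    rw [pw1 f, pc1, mul_zero, add_zero]
  have pc2raw : (d (fw (1:Z) 2)).1 2 + (d (fw (1:Z) 2)).1 2 = 0 := by
    have h := q (fw (1:Z) 2) (fw (1:Z) 2)
    rw [mww_2_2 δ] at h
    have hc := congr_fun (congrArg Prod.fst h) 0
    simp [hz, hneg, hwf2, hxs2, hwcomp, hxcomp, jmul, jsig_fst, jsig_snd, fw_fst, fw_snd, fxi_fst, fxi_snd, fw_neg, emul_0, emul_1, emul_2, emul_3, omul_0, omul_1, omul_2, omul_3, eomul_0, eomul_1, eomul_2, eomul_3, Prod.fst_add, Prod.snd_add, Prod.fst_neg, Prod.snd_neg, Pi.add_apply, Pi.neg_apply, Pi.zero_apply, Prod.fst_zero, Prod.snd_zero, Derivation.map_one_eq_zero, map_add, map_sub, map_neg, map_zero, pone] at hc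
    first | linear_combination hc | linear_combination -hc
  have pc2 : (d (fw (1:Z) 2)).1 2 = 0 := char2_trick h2 _ pc2raw
  have pw2' : ∀ f : Z, (d (fw f 2)).1 2 = (d (fw f 0)).1 0 := fun f => by
    rw [pw2 f, pc2, mul_zero, add_zero]
  have pc3raw : (d (fw (1:Z) 3)).1 3 + (d (fw (1:Z) 3)).1 3 = 0 := by
    have h := q (fw (1:Z) 3) (fw (1:Z) 3)
    rw [mww_3_3 δ] at h
    have hc := congr_fun (congrArg Prod.fst h) 0
    simp [hz, hneg, hwf2, hxs2, hwcomp, hxcomp, jmul, jsig_fst, jsig_snd, fw_fst, fw_snd, fxi_fst, fxi_snd, fw_neg, emul_0, emul_1, emul_2, emul_3, omul_0, omul_1, omul_2, omul_3, eomul_0, eomul_1, eomul_2, eomul_3, Prod.fst_add, Prod.snd_add, Prod.fst_neg, Prod.snd_neg, Pi.add_apply, Pi.neg_apply, Pi.zero_apply, Prod.fst_zero, Prod.snd_zero, Derivation.map_one_eq_zero, map_add, map_sub, map_neg, map_zero, pone] at hc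
    first | linear_combination hc | linear_combination -hc
  have pc3 : (d (fw (1:Z) 3)).1 3 = 0 := char2_trick h2 _ pc3raw
  have pw3' : ∀ f : Z, (d (fw f 3)).1 3 = (d (fw f 0)).1 0 := fun f => by
    rw [pw3 f, pc3, mul_zero, add_zero]
  have pn0 : ∀ f : Z, (d (fxi f 0)).2 0 = (d (fw f 0)).1 0 + f * a := by
    intro f
    have h := q (fw f 0) (fxi (1:Z) 0)
    rw [mwx_0_0 δ] at h
    have hc := congr_fun (congrArg Prod.snd h) 0
    simp [hz, hneg, hwf2, hxs2, hwcomp, hxcomp, jmul, jsig_fst, jsig_snd, fw_fst, fw_snd, fxi_fst, fxi_snd, fw_neg, emul_0, emul_1, emul_2, emul_3, omul_0, omul_1, omul_2, omul_3, eomul_0, eomul_1, eomul_2, eomul_3, Prod.fst_add, Prod.snd_add, Prod.fst_neg, Prod.snd_neg, Pi.add_apply, Pi.neg_apply, Pi.zero_apply, Prod.fst_zero, Prod.snd_zero, Derivation.map_one_eq_zero, map_add, map_sub, map_neg, map_zero] at hc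
    first
      | linear_combination hc
      | linear_combination -hc
      | (rw [ha]; first | linear_combination hc | linear_combination -hc)
  have pcomm : ∀ f : Z, (d (fw (δ f) 0)).1 0 = δ ((d (fw f 0)).1 0) + 2*(a*δ f) := by
    intro f
    have h := q (fxi f 0) (fxi (1:Z) 0)
    rw [mxx_0_0 δ] at h
    have hc := congr_fun (congrArg Prod.fst h) 0
    simp [hz, hneg, hwf2, hxs2, hwcomp, hxcomp, jmul, jsig_fst, jsig_snd, fw_fst, fw_snd, fxi_fst, fxi_snd, fw_neg, emul_0, emul_1, emul_2, emul_3, omul_0, omul_1, omul_2, omul_3, eomul_0, eomul_1, eomul_2, eomul_3, Prod.fst_add, Prod.snd_add, Prod.fst_neg, Prod.snd_neg, Pi.add_apply, Pi.neg_apply, Pi.zero_apply, Prod.fst_zero, Prod.snd_zero, Derivation.map_one_eq_zero, map_add, map_sub, map_neg, map_zero, pn0, pone, Derivation.leibniz, smul_eq_mul] at hc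
    first | linear_combination hc | linear_combination -hc
  have pn1 : ∀ f : Z, (d (fxi f 1)).2 1 = (d (fw f 0)).1 0 + f * (d (fxi (1:Z) 1)).2 1 := by
    intro f
    have h := q (fw f 0) (fxi (1:Z) 1)
    rw [mwx_0_1 δ] at h
    have hc := congr_fun (congrArg Prod.snd h) 1
    simp [hz, hneg, hwf2, hxs2, hwcomp, hxcomp, jmul, jsig_fst, jsig_snd, fw_fst, fw_snd, fxi_fst, fxi_snd, fw_neg, emul_0, emul_1, emul_2, emul_3, omul_0, omul_1, omul_2, omul_3, eomul_0, eomul_1, eomul_2, eomul_3, Prod.fst_add, Prod.snd_add, Prod.fst_neg, Prod.snd_neg, Pi.add_apply, Pi.neg_apply, Pi.zero_apply, Prod.fst_zero, Prod.snd_zero, Derivation.map_one_eq_zero, map_add, map_sub, map_neg, map_zero] at hc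
    first | linear_combination hc | linear_combination -hc
  have pq1 : ∀ f : Z, (d (fxi (δ f) 1)).2 1 = δ ((d (fw f 1)).1 1) + δ f * a := by
    intro f
    have h := q (fw f 1) (fxi (1:Z) 0)
    rw [mwx_1_0 δ] at h
    have hc := congr_fun (congrArg Prod.snd h) 1
    simp [hz, hneg, hwf2, hxs2, hwcomp, hxcomp, jmul, jsig_fst, jsig_snd, fw_fst, fw_snd, fxi_fst, fxi_snd, fw_neg, emul_0, emul_1, emul_2, emul_3, omul_0, omul_1, omul_2, omul_3, eomul_0, eomul_1, eomul_2, eomul_3, Prod.fst_add, Prod.snd_add, Prod.fst_neg, Prod.snd_neg, Pi.add_apply, Pi.neg_apply, Pi.zero_apply, Prod.fst_zero, Prod.snd_zero, Derivation.map_one_eq_zero, map_add, map_sub, map_neg, map_zero, pn0, pone] at hc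
    first
      | linear_combination hc
      | linear_combination -hc
      | (rw [ha]; first | linear_combination hc | linear_combination -hc)
  have pkey1 : ∀ f : Z, ((d (fxi (1:Z) 1)).2 1 + a) * δ f = 0 := by
    intro f
    have e1 := pn1 (δ f)
    have e2 := pq1 f
    have e3 := pcomm f
    have e4 := congrArg (⇑δ) (pw1' f)
    linear_combination -e1 + e2 - e3 + e4
  have pb1 : (d (fxi (1:Z) 1)).2 1 = -a := by
    have := span_trick δ hspan _ (pkey1)
    linear_combination this
  have pn1' : ∀ f : Z, (d (fxi f 1)).2 1 = (d (fw f 0)).1 0 - a * f := fun f => by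
    rw [pn1 f, pb1]; ring
  have pn2 : ∀ f : Z, (d (fxi f 2)).2 2 = (d (fw f 0)).1 0 + f * (d (fxi (1:Z) 2)).2 2 := by
    intro f
    have h := q (fw f 0) (fxi (1:Z) 2)
    rw [mwx_0_2 δ] at h
    have hc := congr_fun (congrArg Prod.snd h) 2
    simp [hz, hneg, hwf2, hxs2, hwcomp, hxcomp, jmul, jsig_fst, jsig_snd, fw_fst, fw_snd, fxi_fst, fxi_snd, fw_neg, emul_0, emul_1, emul_2, emul_3, omul_0, omul_1, omul_2, omul_3, eomul_0, eomul_1, eomul_2, eomul_3, Prod.fst_add, Prod.snd_add, Prod.fst_neg, Prod.snd_neg, Pi.add_apply, Pi.neg_apply, Pi.zero_apply, Prod.fst_zero, Prod.snd_zero, Derivation.map_one_eq_zero, map_add, map_sub, map_neg, map_zero] at hc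
    first | linear_combination hc | linear_combination -hc
  have pq2 : ∀ f : Z, (d (fxi (δ f) 2)).2 2 = δ ((d (fw f 2)).1 2) + δ f * a := by
    intro f
    have h := q (fw f 2) (fxi (1:Z) 0)
    rw [mwx_2_0 δ] at h
    have hc := congr_fun (congrArg Prod.snd h) 2
    simp [hz, hneg, hwf2, hxs2, hwcomp, hxcomp, jmul, jsig_fst, jsig_snd, fw_fst, fw_snd, fxi_fst, fxi_snd, fw_neg, emul_0, emul_1, emul_2, emul_3, omul_0, omul_1, omul_2, omul_3, eomul_0, eomul_1, eomul_2, eomul_3, Prod.fst_add, Prod.snd_add, Prod.fst_neg, Prod.snd_neg, Pi.add_apply, Pi.neg_apply, Pi.zero_apply, Prod.fst_zero, Prod.snd_zero, Derivation.map_one_eq_zero, map_add, map_sub, map_neg, map_zero, pn0, pone] at hc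
    first
      | linear_combination hc
      | linear_combination -hc
      | (rw [ha]; first | linear_combination hc | linear_combination -hc)
  have pkey2 : ∀ f : Z, ((d (fxi (1:Z) 2)).2 2 + a) * δ f = 0 := by
    intro f
    have e1 := pn2 (δ f)
    have e2 := pq2 f
    have e3 := pcomm f
    have e4 := congrArg (⇑δ) (pw2' f)
    linear_combination -e1 + e2 - e3 + e4
  have pb2 : (d (fxi (1:Z) 2)).2 2 = -a := by
    have := span_trick δ hspan _ (pkey2)
    linear_combination this
  have pn2' : ∀ f : Z, (d (fxi f 2)).2 2 = (d (fw f 0)).1 0 - a * f := fun f => by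
    rw [pn2 f, pb2]; ring
  have pn3 : ∀ f : Z, (d (fxi f 3)).2 3 = (d (fw f 0)).1 0 + f * (d (fxi (1:Z) 3)).2 3 := by
    intro f
    have h := q (fw f 0) (fxi (1:Z) 3)
    rw [mwx_0_3 δ] at h
    have hc := congr_fun (congrArg Prod.snd h) 3
    simp [hz, hneg, hwf2, hxs2, hwcomp, hxcomp, jmul, jsig_fst, jsig_snd, fw_fst, fw_snd, fxi_fst, fxi_snd, fw_neg, emul_0, emul_1, emul_2, emul_3, omul_0, omul_1, omul_2, omul_3, eomul_0, eomul_1, eomul_2, eomul_3, Prod.fst_add, Prod.snd_add, Prod.fst_neg, Prod.snd_neg, Pi.add_apply, Pi.neg_apply, Pi.zero_apply, Prod.fst_zero, Prod.snd_zero, Derivation.map_one_eq_zero, map_add, map_sub, map_neg, map_zero] at hc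
    first | linear_combination hc | linear_combination -hc
  have pq3 : ∀ f : Z, (d (fxi (δ f) 3)).2 3 = δ ((d (fw f 3)).1 3) + δ f * a := by
    intro f
    have h := q (fw f 3) (fxi (1:Z) 0)
    rw [mwx_3_0 δ] at h
    have hc := congr_fun (congrArg Prod.snd h) 3
    simp [hz, hneg, hwf2, hxs2, hwcomp, hxcomp, jmul, jsig_fst, jsig_snd, fw_fst, fw_snd, fxi_fst, fxi_snd, fw_neg, emul_0, emul_1, emul_2, emul_3, omul_0, omul_1, omul_2, omul_3, eomul_0, eomul_1, eomul_2, eomul_3, Prod.fst_add, Prod.snd_add, Prod.fst_neg, Prod.snd_neg, Pi.add_apply, Pi.neg_apply, Pi.zero_apply, Prod.fst_zero, Prod.snd_zero, Derivation.map_one_eq_zero, map_add, map_sub, map_neg, map_zero, pn0, pone] at hc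
    first
      | linear_combination hc
      | linear_combination -hc
      | (rw [ha]; first | linear_combination hc | linear_combination -hc)
  have pkey3 : ∀ f : Z, ((d (fxi (1:Z) 3)).2 3 + a) * δ f = 0 := by
    intro f
    have e1 := pn3 (δ f)
    have e2 := pq3 f
    have e3 := pcomm f
    have e4 := congrArg (⇑δ) (pw3' f)
    linear_combination -e1 + e2 - e3 + e4
  have pb3 : (d (fxi (1:Z) 3)).2 3 = -a := by
    have := span_trick δ hspan _ (pkey3)
    linear_combination this
  have pn3' : ∀ f : Z, (d (fxi f 3)).2 3 = (d (fw f 0)).1 0 - a * f := fun f => by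
    rw [pn3 f, pb3]; ring
  refine ⟨fun f => (d (fw f 0)).1 0, a, ?_, ?_, ?_, ?_, ?_, ?_⟩
  · intro x y
    have : d (fw (x + y) 0) = d (fw x 0) + d (fw y 0) := by rw [fw_add, hadd]
    simpa using congr_fun (congrArg Prod.fst this) 0
  · intro c x
    have : d (fw (c • x) 0) = c • d (fw x 0) := by rw [fw_smul, hsmul]
    simpa using congr_fun (congrArg Prod.fst this) 0
  · exact fun x y => pder x y
  · have : d (fw (0:Z) 0) = 0 := by rw [fw_zero, hz]
    simpa using congr_fun (congrArg Prod.fst this) 0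
  · exact fun x => pcomm x
  · funext u
    have e := congrArg d (decomp u)
    rw [hadd, hadd, hadd, hadd, hadd, hadd, hadd] at e
    rw [e]
    refine jext ?_ ?_ ?_ ?_ ?_ ?_ ?_ ?_ <;>
      simp [hwf2, hxs2, hwcomp, hxcomp, pone, pn0, pw1', pw2', pw3', pn1', pn2', pn3', jtilde_fst, jtilde_snd_0, jtilde_snd_1, jtilde_snd_2, jtilde_snd_3, Prod.fst_add, Prod.snd_add, Pi.add_apply, Pi.zero_apply] <;> ring

/-! ### jeta and jtilde -/

@[simp] lemma jeta_1_0 (b : Z) (u : J Z) : (jeta b u).1 0 = b * u.2 0 := rfl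
@[simp] lemma jeta_2_k (b : Z) (u : J Z) (k : Fin 4) :
    (jeta b u).2 k = if k = 0 then 0 else -(b * u.1 k) := rfl

lemma jeta_eq (δ : Derivation F Z Z) (b : Z) : jeta b = OddD (⇑δ) b 0 0 0 := by
  funext u
  refine jext ?_ ?_ ?_ ?_ ?_ ?_ ?_ ?_ <;>
    simp [jeta, OddD_1_0, OddD_1_1, OddD_1_2, OddD_1_3, OddD_2_0, OddD_2_1, OddD_2_2, OddD_2_3]

lemma jeta_isDer1 (δ : Derivation F Z Z) (b : Z) : IsDer1 F (⇑δ) (jeta b) := by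
  rw [jeta_eq δ b]; exact OddD_isDer1 δ b 0 0 0

section jt
variable (δ : Derivation F Z Z) (μ : Z → Z) (a : Z)
variable (hadd : ∀ x y, μ (x + y) = μ x + μ y) (hsm : ∀ (c : F) (x : Z), μ (c • x) = c • μ x)
variable (hder : ∀ x y, μ (x*y) = μ x * y + x * μ y) (h0 : μ 0 = 0)
variable (hcomm : ∀ x, μ (δ x) = δ (μ x) + 2*(a*δ x))

omit [Field F] [Algebra F Z] in
include hadd h0 in
lemma mu_sub : ∀ x y, μ (x - y) = μ x - μ y := by
  have hneg : ∀ x, μ (-x) = -μ x := fun x => by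
    have := hadd x (-x); rw [add_neg_cancel, h0] at this; linear_combination -this
  intro x y
  rw [sub_eq_add_neg, hadd, hneg, sub_eq_add_neg]

include hadd hsm hder h0 hcomm in
theorem jtilde_isDer0 : IsDer0 F (⇑δ) (jtilde μ a) := by
  have hsub := mu_sub μ hadd h0
  refine ⟨⟨?_, ?_⟩, ?_, ?_, ?_⟩
  · intro u v
    refine jext ?_ ?_ ?_ ?_ ?_ ?_ ?_ ?_ <;>
      simp only [jtilde_fst, jtilde_snd_0, jtilde_snd_1, jtilde_snd_2, jtilde_snd_3,
        Prod.fst_add, Prod.snd_add, Pi.add_apply, hadd] <;> ring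
  · intro c u
    refine jext ?_ ?_ ?_ ?_ ?_ ?_ ?_ ?_ <;>
      simp only [jtilde_fst, jtilde_snd_0, jtilde_snd_1, jtilde_snd_2, jtilde_snd_3,
        Prod.smul_fst, Prod.smul_snd, Pi.smul_apply, hsm] <;>
      simp only [Algebra.smul_def] <;> ring
  · intro u hu
    refine ext4 ?_ ?_ ?_ ?_ <;> simp [hu, h0]
  · intro u hu
    refine ext4 ?_ ?_ ?_ ?_ <;> simp [jtilde, hu, h0]
  · intro u v
    refine jext ?_ ?_ ?_ ?_ ?_ ?_ ?_ ?_ <;>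
      simp only [jtilde_fst, jtilde_snd_0, jtilde_snd_1, jtilde_snd_2, jtilde_snd_3,
        jmul, emul_0, emul_1, emul_2, emul_3, omul_0, omul_1, omul_2, omul_3,
        eomul_0, eomul_1, eomul_2, eomul_3, Prod.fst_add, Prod.snd_add, Pi.add_apply,
        hadd, hsub, hder, hcomm, h0, Derivation.leibniz, smul_eq_mul, map_add, map_sub] <;>
      ring
end jt

/-! ### grading -/

lemma gset_add {t : ZMod 2 × ZMod 2} {u v : J Z} (hu : u ∈ gset t) (hv : v ∈ gset t) :
    u + v ∈ gset t := fun k hk => by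
  obtain ⟨a1, a2⟩ := hu k hk; obtain ⟨b1, b2⟩ := hv k hk
  constructor <;> simp [a1, a2, b1, b2]

lemma gset_smul (c : F) {t : ZMod 2 × ZMod 2} {u : J Z} (hu : u ∈ gset t) :
    c • u ∈ gset t := fun k hk => by
  obtain ⟨a1, a2⟩ := hu k hk
  constructor <;> simp [Prod.smul_fst, Prod.smul_snd, a1, a2]

lemma gset_sub {t : ZMod 2 × ZMod 2} {u v : J Z} (hu : u ∈ gset t) (hv : v ∈ gset t) :
    u - v ∈ gset t := fun k hk => by
  obtain ⟨a1, a2⟩ := hu k hk; obtain ⟨b1, b2⟩ := hv k hk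
  constructor <;> simp [a1, a2, b1, b2]

lemma gset_jsig {t : ZMod 2 × ZMod 2} {u : J Z} (hu : u ∈ gset t) : jsig u ∈ gset t :=
  fun k hk => by
  obtain ⟨a1, a2⟩ := hu k hk
  constructor <;> simp [jsig, a1, a2]

lemma jsig_add (u v : J Z) : jsig (u + v) = jsig u + jsig v := by
  refine Prod.ext rfl ?_
  simp only [jsig_snd, Prod.snd_add]
  abel

lemma jtilde_deg (μ : Z → Z) (a : Z) (h0 : μ 0 = 0) :
    DerDeg ((0, 0) : ZMod 2 × ZMod 2) (jtilde μ a) := by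
  intro s u hu
  rw [addz]
  intro k hk
  obtain ⟨a1, a2⟩ := hu k hk
  refine ⟨by simp [a1, h0], ?_⟩
  rcases eq_or_ne k 0 with rfl | hne
  · simp [jtilde, a2, h0]
  · simp [jtilde, hne, a2, h0]

lemma jeta_deg (b : Z) : DerDeg ((0, 0) : ZMod 2 × ZMod 2) (jeta b) := by
  intro s u hu
  rw [addz]
  intro k hk
  obtain ⟨a1, a2⟩ := hu k hk
  constructor
  · rcases eq_or_ne k 0 with rfl | hne
    · simp [a2]
    · simp [jeta, hne]
  · rcases eq_or_ne k 0 with rfl | hne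
    · simp
    · simp [hne, a1]

lemma derdeg_add {d d' : J Z → J Z} (hd : DerDeg ((0, 0) : ZMod 2 × ZMod 2) d)
    (hd' : DerDeg ((0, 0) : ZMod 2 × ZMod 2) d') :
    DerDeg ((0, 0) : ZMod 2 × ZMod 2) (d + d') := by
  intro s u hu
  rw [addz]
  have h1 := hd s u hu; rw [addz] at h1
  have h2 := hd' s u hu; rw [addz] at h2
  exact gset_add h1 h2

/-! ### parity decomposition -/

lemma even_sig (δ : Z → Z) (d0 : J Z → J Z) (h : IsDer0 F δ d0) (u : J Z) :
    jsig (d0 (jsig u)) = d0 u := by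
  obtain ⟨⟨hadd, hsmul⟩, hp1, hp2, -⟩ := h
  have hneg : ∀ v, d0 (-v) = -d0 v := fun v => by
    rw [← neg_one_smul F v, hsmul, neg_one_smul]
  have e1 : u = ((u.1, 0) : J Z) + ((0, u.2) : J Z) := by
    refine Prod.ext ?_ ?_ <;> simp
  have e2 : jsig u = ((u.1, 0) : J Z) + -((0, u.2) : J Z) := by
    refine Prod.ext ?_ ?_ <;> simp [jsig]
  have v1 : (d0 ((u.1, 0) : J Z)).2 = 0 := hp1 _ rfl
  have v2 : (d0 ((0, u.2) : J Z)).1 = 0 := hp2 _ rfl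
  rw [e2, hadd, hneg]
  conv_rhs => rw [e1, hadd]
  refine Prod.ext ?_ ?_
  · simp [jsig, v2]
  · simp [jsig, v1]

lemma odd_sig (δ : Z → Z) (d1 : J Z → J Z) (h : IsDer1 F δ d1) (u : J Z) :
    jsig (d1 (jsig u)) = -(d1 u) := by
  obtain ⟨⟨hadd, hsmul⟩, hp1, hp2, -⟩ := h
  have hneg : ∀ v, d1 (-v) = -d1 v := fun v => by
    rw [← neg_one_smul F v, hsmul, neg_one_smul]
  have e1 : u = ((u.1, 0) : J Z) + ((0, u.2) : J Z) := by
    refine Prod.ext ?_ ?_ <;> simp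
  have e2 : jsig u = ((u.1, 0) : J Z) + -((0, u.2) : J Z) := by
    refine Prod.ext ?_ ?_ <;> simp [jsig]
  have v1 : (d1 ((u.1, 0) : J Z)).1 = 0 := hp1 _ rfl
  have v2 : (d1 ((0, u.2) : J Z)).2 = 0 := hp2 _ rfl
  rw [e2, hadd, hneg]
  conv_rhs => rw [e1, hadd]
  refine Prod.ext ?_ ?_
  · simp [jsig, v1]
  · simp [jsig, v2]

lemma degree_decomp (h2 : (2:F) ≠ 0) (δ : Z → Z) (d0 d1 : J Z → J Z)
    (h0 : IsDer0 F δ d0) (h1 : IsDer1 F δ d1)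
    (hdeg : DerDeg ((0, 0) : ZMod 2 × ZMod 2) (d0 + d1)) :
    DerDeg ((0, 0) : ZMod 2 × ZMod 2) d0 ∧ DerDeg ((0, 0) : ZMod 2 × ZMod 2) d1 := by
  have key : ∀ s (u : J Z), u ∈ gset s → d0 u ∈ gset s := by
    intro s u hu
    have hd : (d0 + d1) u ∈ gset s := by have := hdeg s u hu; rwa [addz] at this
    have hds : (d0 + d1) (jsig u) ∈ gset s := by
      have := hdeg s (jsig u) (gset_jsig hu); rwa [addz] at this
    have hform : d0 u = (2:F)⁻¹ • ((d0 + d1) u + jsig ((d0 + d1) (jsig u))) := by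
      have q1 := even_sig δ d0 h0 u
      have q2 := odd_sig δ d1 h1 u
      simp only [Pi.add_apply]
      rw [jsig_add, q1, q2]
      rw [show d0 u + d1 u + (d0 u + -d1 u) = (2:F) • d0 u by rw [two_smul]; abel]
      rw [inv_smul_smul₀ h2]
    rw [hform]
    exact gset_smul _ (gset_add hd (gset_jsig hds))
  constructor
  · intro s u hu; rw [addz]; exact key s u hu
  · intro s u hu; rw [addz]
    have he : d1 u = (d0 + d1) u - d0 u := by simp
    rw [he]
    exact gset_sub (by have := hdeg s u hu; rwa [addz] at this) (key s u hu)

/-! ### the Kantor double K -/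

@[simp] lemma kmul_fst (δ : Z → Z) (u v : Z × Z) :
    (kmul δ u v).1 = u.1 * v.1 + (δ u.2 * v.2 - u.2 * δ v.2) := rfl
@[simp] lemma kmul_snd (δ : Z → Z) (u v : Z × Z) :
    (kmul δ u v).2 = u.1 * v.2 + v.1 * u.2 := rfl
@[simp] lemma kcheck_apply (μ : Z → Z) (a : Z) (u : Z × Z) :
    kcheck μ a u = (μ u.1, μ u.2 + a * u.2) := rfl
@[simp] lemma keta_apply (b : Z) (u : Z × Z) : keta b u = (b * u.2, 0) := rfl

lemma km00 (δ : Derivation F Z Z) (f g : Z) :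
    kmul (⇑δ) (f, 0) (g, 0) = ((f*g : Z), (0:Z)) := by simp [kmul]
lemma km01 (δ : Derivation F Z Z) (f g : Z) :
    kmul (⇑δ) (f, 0) ((0:Z), g) = ((0:Z), f*g) := by simp [kmul]
lemma km11 (δ : Derivation F Z Z) (f g : Z) :
    kmul (⇑δ) ((0:Z), f) ((0:Z), g) = ((δ f * g - f * δ g : Z), (0:Z)) := by simp [kmul]

theorem isKDer0_structure (δ : Derivation F Z Z) (e : Z × Z → Z × Z) (he : IsKDer0 F (⇑δ) e) :
    ∃ (μ : Z → Z) (a : Z),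
      (∀ x y, μ (x + y) = μ x + μ y) ∧ (∀ (c : F) (x : Z), μ (c • x) = c • μ x) ∧
      (∀ x y, μ (x*y) = μ x * y + x * μ y) ∧ μ 0 = 0 ∧
      (∀ x, μ (δ x) = δ (μ x) + 2*(a*δ x)) ∧ e = kcheck μ a := by
  obtain ⟨⟨hadd, hsmul⟩, hp1, hp2, q⟩ := he
  have h1 : ∀ f : Z, (e (f, 0)).2 = 0 := fun f => hp1 _ rfl
  have h2 : ∀ f : Z, (e ((0:Z), f)).1 = 0 := fun f => hp2 _ rfl
  obtain ⟨a, ha⟩ : ∃ z : Z, z = (e ((0:Z), (1:Z))).2 := ⟨_, rfl⟩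
  have pder : ∀ f g : Z, (e (f*g, 0)).1 = (e (f, 0)).1 * g + f * (e (g, 0)).1 := by
    intro f g
    have h := q (f, 0) (g, 0)
    rw [km00] at h
    have hc := congrArg Prod.fst h
    simp [h1, h2] at hc
    first | linear_combination hc | linear_combination -hc
  have pnu : ∀ f : Z, (e ((0:Z), f)).2 = (e (f, 0)).1 + f * a := by
    intro f
    have h := q (f, 0) ((0:Z), (1:Z))
    rw [km01] at h
    have hc := congrArg Prod.snd h
    simp [h1, h2] at hc
    first
      | linear_combination hc
      | linear_combination -hc
      | (rw [ha]; first | linear_combination hc | linear_combination -hc)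
  have pone : (e ((1:Z), (0:Z))).1 = 0 := by
    have h := pder 1 1
    simp only [mul_one, one_mul] at h
    linear_combination -h
  have pcomm : ∀ f : Z, (e (δ f, 0)).1 = δ ((e (f, 0)).1) + 2*(a*δ f) := by
    intro f
    have h := q ((0:Z), f) ((0:Z), (1:Z))
    rw [km11] at h
    have hc := congrArg Prod.fst h
    simp [h1, h2, pnu, pone, Derivation.leibniz, smul_eq_mul, map_add, map_zero] at hc
    first | linear_combination hc | linear_combination -hc
  have hz : e 0 = 0 := by simpa using hsmul 0 0
  refine ⟨fun f => (e (f, 0)).1, a, ?_, ?_, pder, ?_, pcomm, ?_⟩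
  · intro x y
    have h : e ((x + y : Z), (0:Z)) = e (x, 0) + e (y, 0) := by
      rw [show ((x+y : Z), (0:Z)) = ((x, 0) : Z × Z) + ((y, 0) : Z × Z) by simp, hadd]
    simpa using congrArg Prod.fst h
  · intro c x
    have h : e ((c • x : Z), (0:Z)) = c • e (x, 0) := by
      rw [show ((c • x : Z), (0:Z)) = c • ((x, 0) : Z × Z) by simp, hsmul]
    simpa using congrArg Prod.fst h
  · have h : e ((0:Z), (0:Z)) = 0 := hz
    simpa using congrArg Prod.fst h
  · funext p
    have hp : p = ((p.1, 0) : Z × Z) + (((0:Z), p.2) : Z × Z) := by simp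
    have h : e p = e ((p.1, 0) : Z × Z) + e (((0:Z), p.2) : Z × Z) := by
      conv_lhs => rw [hp]
      rw [hadd]
    rw [h]
    refine Prod.ext ?_ ?_
    · simp [h2]
    · simp only [kcheck_apply, Prod.snd_add]
      rw [h1, pnu]
      ring

theorem kcheck_isKDer0 (δ : Derivation F Z Z) (μ : Z → Z) (a : Z)
    (hadd : ∀ x y, μ (x + y) = μ x + μ y) (hsm : ∀ (c : F) (x : Z), μ (c • x) = c • μ x)
    (hder : ∀ x y, μ (x*y) = μ x * y + x * μ y) (h0 : μ 0 = 0)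
    (hcomm : ∀ x, μ (δ x) = δ (μ x) + 2*(a*δ x)) :
    IsKDer0 F (⇑δ) (kcheck μ a) := by
  have hsub := mu_sub μ hadd h0
  refine ⟨⟨?_, ?_⟩, ?_, ?_, ?_⟩
  · intro u v
    refine Prod.ext ?_ ?_ <;>
      simp only [kcheck_apply, Prod.fst_add, Prod.snd_add, hadd] <;> ring
  · intro c u
    refine Prod.ext ?_ ?_ <;>
      simp only [kcheck_apply, Prod.smul_fst, Prod.smul_snd, hsm] <;>
      simp only [Algebra.smul_def] <;> ring
  · intro u hu
    simp [hu, h0]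
  · intro u hu
    simp [hu, h0]
  · intro u v
    refine Prod.ext ?_ ?_ <;>
      simp only [kcheck_apply, kmul_fst, kmul_snd, Prod.fst_add, Prod.snd_add, hadd, hsub,
        hder, hcomm, h0, Derivation.leibniz, smul_eq_mul, map_add, map_sub] <;> ring

lemma rest_eq (μ : Z → Z) (a bb : Z) :
    (pik ∘ (jtilde μ a + jeta bb) ∘ kap : Z × Z → Z × Z) = kcheck μ a + keta bb := by
  funext p
  refine Prod.ext ?_ ?_ <;>
    simp [pik, kap, jtilde, jeta, kcheck, keta]

lemma deg00_form (h2 : (2:F) ≠ 0) (δ : Derivation F Z Z)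
    (hspan : Submodule.span F {z : Z | ∃ f g : Z, z = f * δ g} = ⊤)
    (d : J Z → J Z) (hd : d ∈ DerJSet F (⇑δ)) (hdeg : DerDeg ((0, 0) : ZMod 2 × ZMod 2) d) :
    ∃ (μ : Z → Z) (a bb : Z),
      (∀ x y, μ (x + y) = μ x + μ y) ∧ (∀ (c : F) (x : Z), μ (c • x) = c • μ x) ∧
      (∀ x y, μ (x*y) = μ x * y + x * μ y) ∧ μ 0 = 0 ∧
      (∀ x, μ (δ x) = δ (μ x) + 2*(a*δ x)) ∧ d = jtilde μ a + jeta bb := by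
  obtain ⟨d0, d1, h0, h1, rfl⟩ := hd
  obtain ⟨hdeg0, hdeg1⟩ := degree_decomp h2 (⇑δ) d0 d1 h0 h1 hdeg
  obtain ⟨μ, a, c1, c2, c3, c4, c5, hjt⟩ := isDer0_structure h2 δ hspan d0 h0 hdeg0
  obtain ⟨b, a1, a2, a3, hod⟩ := isDer1_structure δ d1 h1
  have zkill : ∀ i : Fin 4, i ≠ 0 → (d1 (fw (1:Z) i)).2 0 = 0 := by
    intro i hi
    have m := hdeg1 (tvec i) (fw (1:Z) i) (fw_mem_gset 1 i)
    rw [addz] at m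
    exact (m 0 (by rw [idx_tvec]; exact (Ne.symm hi))).2
  have z1 : a1 = 0 := by
    have := zkill 1 (by decide)
    rw [hod] at this
    simpa [OddD_2_0] using this
  have z2 : a2 = 0 := by
    have := zkill 2 (by decide)
    rw [hod] at this
    simpa [OddD_2_0] using this
  have z3 : a3 = 0 := by
    have := zkill 3 (by decide)
    rw [hod] at this
    simpa [OddD_2_0] using this
  refine ⟨μ, a, b, c1, c2, c3, c4, c5, ?_⟩
  rw [hjt, hod, z1, z2, z3, ← jeta_eq δ b]

lemma mu_one {μ : Z → Z} (hder : ∀ x y : Z, μ (x*y) = μ x * y + x * μ y) : μ 1 = 0 := by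
  have h := hder 1 1
  simp only [mul_one, one_mul] at h
  linear_combination -h

end CKJAux

open CKJ
open CKJAux
theorem stmt12 {F : Type*} [Field F] (h2 : (2 : F) ≠ 0) {Z : Type*} [CommRing Z] [Algebra F Z]
    (δ : Derivation F Z Z)
    (hspan : Submodule.span F {z : Z | ∃ f g : Z, z = f * δ g} = ⊤) :
    -- (i) every odd derivation of J is inner: Der(J)₁ = Inder(J)₁
    ({d : J Z → J Z | IsDer1 F (⇑δ) d}
        = (Submodule.span F (InderSet1 (⇑δ)) : Set (J Z → J Z))) ∧
    -- (ii) the restriction map Der(J)^{[0,0]} → Der(K) is injective with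
    -- image D̄er(K) = Der(K)₀ ⊕ {η_a : a ∈ Z}
    Set.InjOn (fun d : J Z → J Z => pik ∘ d ∘ kap)
      {d | d ∈ DerJSet F (⇑δ) ∧ DerDeg ((0, 0) : ZMod 2 × ZMod 2) d} ∧
    ((fun d : J Z → J Z => pik ∘ d ∘ kap) ''
        {d | d ∈ DerJSet F (⇑δ) ∧ DerDeg ((0, 0) : ZMod 2 × ZMod 2) d}
      = DerbarK F (⇑δ)) ∧
    -- (iii) dim_F Der(J)₁ = 4 · dim_F Z = dim_F J₁
    Module.rank F ↥(Submodule.span F {d : J Z → J Z | IsDer1 F (⇑δ) d})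
        = 4 * Module.rank F Z ∧
    Module.rank F (Fin 4 → Z) = 4 * Module.rank F Z := by
  refine ⟨?_, ?_, ?_, part3 δ hspan, rank_fin4⟩
  · rw [span_eq_range δ]
    exact der1_set_eq δ
  · rintro d ⟨hd, hdeg⟩ d' ⟨hd', hdeg'⟩ heq
    obtain ⟨μ, a, bb, c1, c2, c3, c4, c5, rfl⟩ := deg00_form h2 δ hspan d hd hdeg
    obtain ⟨μ', a', bb', c1', c2', c3', c4', c5', rfl⟩ := deg00_form h2 δ hspan d' hd' hdeg'
    dsimp only at heq
    rw [rest_eq, rest_eq] at heq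
    have hμ : ∀ f, μ f = μ' f := by
      intro f
      have h := congrArg Prod.fst (congr_fun heq (f, (0:Z)))
      simpa [kcheck, keta] using h
    have hμ1 : μ 1 = 0 := mu_one c3
    have hμ1' : μ' 1 = 0 := mu_one c3'
    have hbb : bb = bb' := by
      have h := congrArg Prod.fst (congr_fun heq ((0:Z), (1:Z)))
      simpa [kcheck, keta, c4, c4'] using h
    have ha : a = a' := by
      have h := congrArg Prod.snd (congr_fun heq ((0:Z), (1:Z)))
      simpa [kcheck, keta, hμ1, hμ1'] using h
    rw [funext hμ, ha, hbb]
  · ext e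
    constructor
    · rintro ⟨d, ⟨hd, hdeg⟩, rfl⟩
      obtain ⟨μ, a, bb, c1, c2, c3, c4, c5, rfl⟩ := deg00_form h2 δ hspan d hd hdeg
      refine ⟨kcheck μ a, bb, kcheck_isKDer0 δ μ a c1 c2 c3 c4 c5, ?_⟩
      dsimp only
      rw [rest_eq]
    · rintro ⟨e0, bb, he0, rfl⟩
      obtain ⟨μ, a, c1, c2, c3, c4, c5, rfl⟩ := isKDer0_structure δ e0 he0
      refine ⟨jtilde μ a + jeta bb,
        ⟨⟨jtilde μ a, jeta bb, jtilde_isDer0 δ μ a c1 c2 c3 c4 c5, jeta_isDer1 δ bb, rfl⟩,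
          derdeg_add (jtilde_deg μ a c4) (jeta_deg bb)⟩, ?_⟩
      dsimp only
      rw [rest_eq]
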